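/- arXiv:1210.6611 — 6 statements merged into one kernel-verified Lean document; each statement's English description precedes it below -/
import Mathlib

section
/- Let α ∈ (0,1), φ₁ > 0, and let f : [φ₁,∞) → (0,∞) be a nonincreasing C² function with f(φ) → 0 as φ → ∞. Assume there exist positive constants m, m̄, M₁, M₂, M₃ such that for all φ ≥ φ₁: m·φ^{−α} ≤ f(φ) ≤ m̄·φ^{−α}, M₁·φ^{−α−1} ≤ |f′(φ)| ≤ M₂·φ^{−α−1}, and |f″(φ)| ≤ M₃·φ^{−α}. Then the graph Γ of r = f(φ) in polar coordinates satisfies dim_B Γ = 2/(1+α), i.e. its lower and upper box dimensions both equal 2/(1+α). -/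
open Set Filter MeasureTheory Real

noncomputable section

/-- The Euclidean ε-neighborhood `A_ε = {y : dist(y, A) < ε}` of a set `A ⊆ ℝ²`
(with the Euclidean distance). -/
def euclNbhd (A : Set (ℝ × ℝ)) (ε : ℝ) : Set (ℝ × ℝ) :=
  {y | ∃ a ∈ A, Real.sqrt ((y.1 - a.1) ^ 2 + (y.2 - a.2) ^ 2) < ε}

/-- Lower `s`-dimensional Minkowski content of a set `A ⊆ ℝ²`:
`liminf_{ε→0⁺} vol₂(A_ε) / ε^{2-s}`. -/
def lowerMinkowskiContent (A : Set (ℝ × ℝ)) (s : ℝ) : ENNReal :=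
  Filter.liminf
    (fun ε : ℝ => MeasureTheory.volume (euclNbhd A ε) / ENNReal.ofReal (ε ^ (2 - s)))
    (nhdsWithin 0 (Set.Ioi 0))

/-- Upper `s`-dimensional Minkowski content of a set `A ⊆ ℝ²`:
`limsup_{ε→0⁺} vol₂(A_ε) / ε^{2-s}`. -/
def upperMinkowskiContent (A : Set (ℝ × ℝ)) (s : ℝ) : ENNReal :=
  Filter.limsup
    (fun ε : ℝ => MeasureTheory.volume (euclNbhd A ε) / ENNReal.ofReal (ε ^ (2 - s)))
    (nhdsWithin 0 (Set.Ioi 0))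

/-- Lower box dimension: `inf {s ≥ 0 : M_*^s(A) = 0}`. -/
def lowerBoxDim (A : Set (ℝ × ℝ)) : ℝ :=
  sInf {s : ℝ | 0 ≤ s ∧ lowerMinkowskiContent A s = 0}

/-- Upper box dimension: `inf {s ≥ 0 : M^{*s}(A) = 0}`. -/
def upperBoxDim (A : Set (ℝ × ℝ)) : ℝ :=
  sInf {s : ℝ | 0 ≤ s ∧ upperMinkowskiContent A s = 0}

end



/-!
Everything happens at the critical winding angle `φ_ε ≍ ε ^ (-1 / (1 + α))`, where the distance
`≍ 2π |f'(φ)| ≍ φ ^ (-α - 1)` between consecutive turns of the spiral drops to `ε`. Beyond `φ_ε`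
the turns are `ε`-dense, so `Γ_ε` contains a square of side `≍ f(φ_ε) ≍ ε ^ (α / (1 + α))` around
the origin. Conversely, the tail beyond `φ_ε` lies in a ball of that radius, and the arc up to
`φ_ε`, of length `≲ φ_ε ^ (1 - α)` because the speed is `≲ φ ^ (-α)`, is covered by
`≲ φ_ε ^ (1 - α) / ε` balls of radius `ε`. Both estimates give
`vol₂(Γ_ε) ≍ ε ^ (2α / (1 + α)) = ε ^ (2 - 2 / (1 + α))`.
-/

open Topology Metric

theorem csInf_eq_of_Ioi_subset_of_subset_Ici {S : Set ℝ} {d : ℝ} (hIoi : Ioi d ⊆ S)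
    (hIci : S ⊆ Ici d) : sInf S = d :=
  le_antisymm ((csInf_le_csInf ⟨d, hIci⟩ nonempty_Ioi hIoi).trans csInf_Ioi.le)
    (le_csInf ((nonempty_Ioi (a := d)).mono hIoi) hIci)

theorem lowerMinkowskiContent_le_upperMinkowskiContent (A : Set (ℝ × ℝ)) (s : ℝ) :
    lowerMinkowskiContent A s ≤ upperMinkowskiContent A s :=
  liminf_le_limsup (by isBoundedDefault) (by isBoundedDefault)

theorem ofReal_mul_rpow_div_ofReal_rpow {c ε : ℝ} (d s : ℝ) (hε : 0 < ε) :
    ENNReal.ofReal (c * ε ^ (2 - d)) / ENNReal.ofReal (ε ^ (2 - s)) =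
      ENNReal.ofReal (c * ε ^ (s - d)) := by
  rw [← ENNReal.ofReal_div_of_pos (rpow_pos_of_pos hε _), mul_div_assoc, ← rpow_sub hε]
  ring_nf

theorem upperMinkowskiContent_eq_zero_of_volume_le {A : Set (ℝ × ℝ)} {C d s : ℝ} (hds : d < s)
    (hA : ∀ᶠ ε in 𝓝[>] 0, volume (euclNbhd A ε) ≤ ENNReal.ofReal (C * ε ^ (2 - d))) :
    upperMinkowskiContent A s = 0 := by
  have hbound : Tendsto (fun ε : ℝ => ENNReal.ofReal (C * ε ^ (s - d))) (𝓝[>] 0) (𝓝 0) := by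
    have : Tendsto (fun ε : ℝ => C * ε ^ (s - d)) (𝓝[>] 0) (𝓝 (C * 0 ^ (s - d))) :=
      ((continuousAt_rpow_const 0 (s - d) (Or.inr (sub_pos.2 hds).le)).tendsto.const_mul
        C).mono_left nhdsWithin_le_nhds
    simpa [zero_rpow (sub_pos.2 hds).ne'] using ENNReal.tendsto_ofReal this
  refine (tendsto_of_tendsto_of_tendsto_of_le_of_le' tendsto_const_nhds hbound
    (Eventually.of_forall fun _ => zero_le) ?_).limsup_eq
  filter_upwards [hA, self_mem_nhdsWithin] with ε hε hε0
  rw [← ofReal_mul_rpow_div_ofReal_rpow d s hε0]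
  gcongr

theorem lowerMinkowskiContent_eq_top_of_le_volume {A : Set (ℝ × ℝ)} {c d s : ℝ} (hc : 0 < c)
    (hsd : s < d)
    (hA : ∀ᶠ ε in 𝓝[>] 0, ENNReal.ofReal (c * ε ^ (2 - d)) ≤ volume (euclNbhd A ε)) :
    lowerMinkowskiContent A s = ⊤ := by
  have hbound : Tendsto (fun ε : ℝ => ENNReal.ofReal (c * ε ^ (s - d))) (𝓝[>] 0) (𝓝 ⊤) :=
    ENNReal.tendsto_ofReal_atTop.comp
      ((tendsto_rpow_neg_nhdsGT_zero (sub_neg.2 hsd)).const_mul_atTop hc)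
  refine (tendsto_nhds_top_mono hbound ?_).liminf_eq
  filter_upwards [hA, self_mem_nhdsWithin] with ε hε hε0
  rw [← ofReal_mul_rpow_div_ofReal_rpow d s hε0]
  gcongr

theorem boxDim_eq_of_volume_euclNbhd_bounds {A : Set (ℝ × ℝ)} {c C d : ℝ} (hd : 0 ≤ d)
    (hc : 0 < c)
    (hlower : ∀ᶠ ε in 𝓝[>] 0, ENNReal.ofReal (c * ε ^ (2 - d)) ≤ volume (euclNbhd A ε))
    (hupper : ∀ᶠ ε in 𝓝[>] 0, volume (euclNbhd A ε) ≤ ENNReal.ofReal (C * ε ^ (2 - d))) :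
    lowerBoxDim A = d ∧ upperBoxDim A = d := by
  have hup : ∀ s, d < s → upperMinkowskiContent A s = 0 := fun s hs =>
    upperMinkowskiContent_eq_zero_of_volume_le hs hupper
  have hlow : ∀ s, lowerMinkowskiContent A s = 0 → d ≤ s := fun s hs => not_lt.1 fun hsd => by
    simp [lowerMinkowskiContent_eq_top_of_le_volume hc hsd hlower] at hs
  have hlow_le : ∀ s, lowerMinkowskiContent A s ≤ upperMinkowskiContent A s :=
    lowerMinkowskiContent_le_upperMinkowskiContent A
  constructor
  · refine csInf_eq_of_Ioi_subset_of_subset_Ici (fun s hs => ⟨hd.trans hs.le, ?_⟩)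
      fun s hs => hlow s hs.2
    exact le_antisymm ((hlow_le s).trans (hup s hs).le) zero_le
  · refine csInf_eq_of_Ioi_subset_of_subset_Ici (fun s hs => ⟨hd.trans hs.le, hup s hs⟩)
      fun s hs => hlow s (le_antisymm ((hlow_le s).trans hs.2.le) zero_le)

theorem euclNbhd_mono {A B : Set (ℝ × ℝ)} (hAB : A ⊆ B) (ε : ℝ) :
    euclNbhd A ε ⊆ euclNbhd B ε := fun _ ⟨a, ha, h⟩ => ⟨a, hAB ha, h⟩

theorem euclNbhd_subset_thickening (A : Set (ℝ × ℝ)) (ε : ℝ) :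
    euclNbhd A ε ⊆ thickening ε A := by
  rintro y ⟨a, ha, hya⟩
  refine mem_thickening_iff.2 ⟨a, ha, lt_of_le_of_lt ?_ hya⟩
  rw [Prod.dist_eq, Real.dist_eq, Real.dist_eq]
  exact max_le (Real.abs_le_sqrt (by nlinarith)) (Real.abs_le_sqrt (by nlinarith))

theorem volume_ball_prod (x : ℝ × ℝ) (r : ℝ) :
    volume (ball x r) = ENNReal.ofReal (2 * r) ^ 2 := by
  rw [← ball_prod_same, Measure.volume_eq_prod, Measure.prod_prod, Real.volume_ball,
    Real.volume_ball, sq]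

theorem volume_thickening_le_of_subset_closedBall_union {S : Set (ℝ × ℝ)} {x : ℝ × ℝ}
    {c : ℕ → ℝ × ℝ} {n : ℕ} {ρ ε : ℝ} (hρ : 0 ≤ ρ) (hε : 0 < ε)
    (hS : S ⊆ closedBall x ρ ∪ ⋃ i ∈ Finset.range n, closedBall (c i) ε) :
    volume (thickening ε S) ≤
      ENNReal.ofReal ((2 * (ε + ρ)) ^ 2 + n * (4 * ε) ^ 2) := by
  have hcover : thickening ε S ⊆
      ball x (ε + ρ) ∪ ⋃ i ∈ Finset.range n, ball (c i) (ε + ε) := by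
    refine (thickening_subset_of_subset ε hS).trans ?_
    simp only [thickening_union, thickening_iUnion,
      thickening_closedBall hε hρ, thickening_closedBall hε hε.le, subset_refl]
  calc volume (thickening ε S)
      ≤ volume (ball x (ε + ρ)) +
          ∑ i ∈ Finset.range n, volume (ball (c i) (ε + ε)) :=
        (measure_mono hcover).trans <| (measure_union_le _ _).trans <| by
          gcongr; exact measure_biUnion_finset_le _ _
    _ = _ := by
      have hε' : 0 ≤ 2 * (ε + ε) := by positivity
      have hρ' : 0 ≤ 2 * (ε + ρ) := by positivity
      simp only [volume_ball_prod, Finset.sum_const, Finset.card_range, nsmul_eq_mul,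
        ← ENNReal.ofReal_pow hε', ← ENNReal.ofReal_pow hρ', ← ENNReal.ofReal_natCast,
        ← ENNReal.ofReal_mul n.cast_nonneg]
      rw [← ENNReal.ofReal_add (by positivity) (by positivity)]
      ring_nf

noncomputable def polarCurve (f : ℝ → ℝ) (φ : ℝ) : ℝ × ℝ := (f φ * cos φ, f φ * sin φ)

theorem norm_polarCurve_le (f : ℝ → ℝ) (φ : ℝ) : ‖polarCurve f φ‖ ≤ |f φ| := by
  rw [polarCurve, Prod.norm_def, Real.norm_eq_abs, Real.norm_eq_abs, abs_mul, abs_mul]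
  exact max_le (mul_le_of_le_one_right (abs_nonneg _) (abs_cos_le_one φ))
    (mul_le_of_le_one_right (abs_nonneg _) (abs_sin_le_one φ))

theorem hasDerivWithinAt_polarCurve {f : ℝ → ℝ} {f' φ : ℝ} {s : Set ℝ}
    (hf : HasDerivWithinAt f f' s φ) :
    HasDerivWithinAt (polarCurve f)
      (f' * cos φ - f φ * sin φ, f' * sin φ + f φ * cos φ) s φ := by
  have hcos := (hasDerivAt_cos φ).hasDerivWithinAt (s := s)
  have hsin := (hasDerivAt_sin φ).hasDerivWithinAt (s := s)
  exact ((hf.mul hcos).prodMk (hf.mul hsin)).congr_deriv (by ring_nf)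

theorem norm_polarCurve_deriv_le (r r' φ : ℝ) :
    ‖(r' * cos φ - r * sin φ, r' * sin φ + r * cos φ)‖ ≤ |r'| + |r| := by
  have hc := abs_cos_le_one φ
  have hs := abs_sin_le_one φ
  rw [Prod.norm_def, Real.norm_eq_abs, Real.norm_eq_abs]
  refine max_le ((abs_sub _ _).trans ?_) ((abs_add_le _ _).trans ?_) <;>
  · simp only [abs_mul]
    gcongr <;> nlinarith [abs_nonneg r, abs_nonneg r']

theorem norm_sub_le_sub_of_norm_hasDerivWithinAt_le {E : Type*} [NormedAddCommGroup E]
    [NormedSpace ℝ E] {g g' : ℝ → E} {B B' : ℝ → ℝ} {s : Set ℝ} (hs : s.OrdConnected)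
    (hg : ∀ x ∈ s, HasDerivWithinAt g (g' x) s x) (hB : ∀ x ∈ s, HasDerivWithinAt B (B' x) s x)
    (hbound : ∀ x ∈ s, ‖g' x‖ ≤ B' x) {x y : ℝ} (hx : x ∈ s) (hy : y ∈ s) (hxy : x ≤ y) :
    ‖g y - g x‖ ≤ B y - B x := by
  have hIcc : Icc x y ⊆ s := hs.out hx hy
  have hnhds : ∀ t ∈ Ico x y, s ∈ 𝓝[Ici t] t := fun t ht =>
    hs.mem_nhdsGE (hIcc (Ico_subset_Icc_self ht)) hy ht.2
  refine image_norm_le_of_norm_deriv_right_le_deriv_boundary' (f := fun t => g t - g x)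
    (B := fun t => B t - B x) ?_ (fun t ht => ?_) (by simp) ?_ (fun t ht => ?_)
    (fun t ht => hbound t (hIcc (Ico_subset_Icc_self ht))) (right_mem_Icc.2 hxy)
  · exact (show ContinuousOn g s from fun t ht => (hg t ht).continuousWithinAt).mono hIcc |>.sub
      continuousOn_const
  · exact ((hg t (hIcc (Ico_subset_Icc_self ht))).mono_of_mem_nhdsWithin (hnhds t ht)).sub_const _
  · exact (show ContinuousOn B s from fun t ht => (hB t ht).continuousWithinAt).mono hIcc |>.sub
      continuousOn_const
  · exact ((hB t (hIcc (Ico_subset_Icc_self ht))).mono_of_mem_nhdsWithin (hnhds t ht)).sub_const _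

theorem exists_image_subset_biUnion_closedBall {E : Type*} [PseudoMetricSpace E] {g : ℝ → E}
    {σ : ℝ → ℝ} {s : Set ℝ} {L ε : ℝ} (hε : 0 < ε) (hσ : ∀ x ∈ s, σ x ∈ Icc 0 L)
    (hg : ∀ x ∈ s, ∀ y ∈ s, dist (g x) (g y) ≤ |σ x - σ y|) :
    ∃ c : ℕ → E, g '' s ⊆ ⋃ i ∈ Finset.range (⌊L / ε⌋₊ + 1), closedBall (c i) ε := by
  classical
  -- the `i`-th ball is centred at any point of `s` whose `σ`-value lies in `[i ε, (i + 1) ε)`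
  let t : ℕ → ℝ := fun i => if h : ∃ x ∈ s, ⌊σ x / ε⌋₊ = i then h.choose else 0
  refine ⟨fun i => g (t i), ?_⟩
  rintro _ ⟨x, hx, rfl⟩
  set i := ⌊σ x / ε⌋₊
  have hex : ∃ y ∈ s, ⌊σ y / ε⌋₊ = i := ⟨x, hx, rfl⟩
  obtain ⟨hts, hti⟩ : t i ∈ s ∧ ⌊σ (t i) / ε⌋₊ = i := by
    simp only [t, dif_pos hex]
    exact hex.choose_spec
  refine mem_iUnion₂.2 ⟨i, Finset.mem_range.2 (Nat.lt_succ_of_le ?_), mem_closedBall.2 ?_⟩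
  · exact Nat.floor_le_floor (div_le_div_of_nonneg_right (hσ x hx).2 hε.le)
  · have hfloor := Int.abs_sub_lt_one_of_floor_eq_floor (R := ℝ) (a := σ x / ε)
      (b := σ (t i) / ε) (by
        rw [← Int.natCast_floor_eq_floor (div_nonneg (hσ x hx).1 hε.le),
          ← Int.natCast_floor_eq_floor (div_nonneg (hσ _ hts).1 hε.le), hti])
    rw [← sub_div, abs_div, abs_of_pos hε, div_lt_one hε] at hfloor
    exact (hg x hx _ hts).trans hfloor.le

theorem exists_mem_Ico_of_sub_succ_le {a : ℕ → ℝ} {r ε : ℝ} (h₀ : r ≤ a 0)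
    (hstep : ∀ k, a k - a (k + 1) ≤ ε) (hex : ∃ k, a k < r + ε) : ∃ k, a k ∈ Ico r (r + ε) := by
  classical
  refine ⟨Nat.find hex, ?_, Nat.find_spec hex⟩
  rcases Nat.eq_zero_or_eq_succ_pred (Nat.find hex) with h | h
  · rw [h]; exact h₀
  · have hprev := Nat.find_min hex (Nat.pred_lt_self (Nat.pos_of_ne_zero (by omega)))
    rw [h]
    linarith [hstep (Nat.find hex).pred, not_lt.1 hprev]

theorem disk_subset_euclNbhd_polarCurve_image {f : ℝ → ℝ} {Ψ ρ ε : ℝ}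
    (hlim : Tendsto f atTop (𝓝 0)) (hε : 0 < ε)
    (hgap : ∀ ψ ≥ Ψ, f ψ - f (ψ + 2 * π) ≤ ε) (hρ : ∀ φ ∈ Ico Ψ (Ψ + 2 * π), ρ ≤ f φ) :
    {y : ℝ × ℝ | √(y.1 ^ 2 + y.2 ^ 2) ≤ ρ} ⊆ euclNbhd (polarCurve f '' Ici Ψ) ε := by
  intro y hy
  set z : ℂ := ⟨y.1, y.2⟩
  have hy₁ : ‖z‖ * cos z.arg = y.1 := Complex.norm_mul_cos_arg z
  have hy₂ : ‖z‖ * sin z.arg = y.2 := Complex.norm_mul_sin_arg z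
  have hzρ : ‖z‖ ≤ ρ := (Complex.norm_eq_sqrt_sq_add_sq z).trans_le hy
  -- Along the ray through `y`, the radii `f (θ k)` start at `≥ ‖y‖` and fall below `‖y‖ + ε`
  -- in steps of at most `ε`, so one of them is `ε`-close to `‖y‖`.
  set θ : ℕ → ℝ := fun k => toIcoMod two_pi_pos Ψ z.arg + k * (2 * π)
  have hθΨ : ∀ k, Ψ ≤ θ k := fun k =>
    (toIcoMod_mem_Ico two_pi_pos Ψ z.arg).1.trans (le_add_of_nonneg_right (by positivity))
  have hcos : ∀ k, cos (θ k) = cos z.arg := fun k => by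
    simp only [θ, cos_add_nat_mul_two_pi, toIcoMod, zsmul_eq_mul, cos_sub_int_mul_two_pi]
  have hsin : ∀ k, sin (θ k) = sin z.arg := fun k => by
    simp only [θ, sin_add_nat_mul_two_pi, toIcoMod, zsmul_eq_mul, sin_sub_int_mul_two_pi]
  have hθ_tendsto : Tendsto θ atTop atTop :=
    tendsto_atTop_add_const_left _ _ (tendsto_natCast_atTop_atTop.atTop_mul_const two_pi_pos)
  obtain ⟨k, hk⟩ : ∃ k, f (θ k) ∈ Ico ‖z‖ (‖z‖ + ε) := by
    refine exists_mem_Ico_of_sub_succ_le (a := fun k => f (θ k)) ?_ (fun k => ?_) ?_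
    · exact hzρ.trans (hρ _ (by simpa [θ] using toIcoMod_mem_Ico two_pi_pos Ψ z.arg))
    · simpa only [θ, Nat.cast_succ, add_one_mul, ← add_assoc] using hgap _ (hθΨ k)
    · exact ((hlim.comp hθ_tendsto).eventually (gt_mem_nhds (by positivity))).exists
  refine ⟨polarCurve f (θ k), mem_image_of_mem _ (hθΨ k), ?_⟩
  have hdist : (y.1 - f (θ k) * cos (θ k)) ^ 2 + (y.2 - f (θ k) * sin (θ k)) ^ 2 =
      (‖z‖ - f (θ k)) ^ 2 := by
    rw [hcos, hsin, ← hy₁, ← hy₂]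
    linear_combination (‖z‖ - f (θ k)) ^ 2 * sin_sq_add_cos_sq z.arg
  change √((y.1 - f (θ k) * cos (θ k)) ^ 2 + (y.2 - f (θ k) * sin (θ k)) ^ 2) < ε
  rw [hdist, sqrt_sq_eq_abs, abs_sub_lt_iff]
  constructor <;> linarith [hk.1, hk.2]

theorem rpow_two_sub_two_div_one_add {α ε : ℝ} (hα : 1 + α ≠ 0) (hε : 0 < ε) :
    ε ^ (2 - 2 / (1 + α)) = (ε ^ (α / (1 + α))) ^ 2 := by
  rw [← rpow_natCast, ← rpow_mul hε.le]
  congr 1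
  field_simp
  ring

section Spiral

variable {f : ℝ → ℝ} {α φ₁ m M : ℝ}

theorem sub_add_two_pi_le {Ψ ψ : ℝ} (hα : -1 ≤ α) (hφ₁ : 0 < φ₁) (hM : 0 ≤ M) (hΨ : φ₁ ≤ Ψ)
    (hψ : Ψ ≤ ψ) (hf : DifferentiableOn ℝ f (Ici φ₁))
    (hf' : ∀ φ ≥ φ₁, |derivWithin f (Ici φ₁) φ| ≤ M * φ ^ (-α - 1)) :
    f ψ - f (ψ + 2 * π) ≤ 2 * π * (M * Ψ ^ (-α - 1)) := by
  have hmvt := Convex.norm_image_sub_le_of_norm_hasDerivWithin_le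
    (f' := derivWithin f (Ici φ₁)) (C := M * Ψ ^ (-α - 1))
    (fun x hx => (hf x (hΨ.trans hx)).hasDerivWithinAt.mono (Ici_subset_Ici.2 hΨ))
    (fun x hx => (hf' x (hΨ.trans hx)).trans <| mul_le_mul_of_nonneg_left
      (rpow_le_rpow_of_nonpos (hφ₁.trans_le hΨ) hx (by linarith)) hM)
    (convex_Ici Ψ) hψ (show ψ + 2 * π ∈ Ici Ψ from le_add_of_le_of_nonneg hψ two_pi_pos.le)
  rw [Real.norm_eq_abs, Real.norm_eq_abs, add_sub_cancel_left, abs_of_pos two_pi_pos] at hmvt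
  linarith [neg_abs_le (f (ψ + 2 * π) - f ψ)]

theorem ofReal_sq_le_volume_euclNbhd_polarCurve_image {Ψ ε : ℝ} (hα : 0 ≤ α) (hφ₁ : 0 < φ₁)
    (hm : 0 ≤ m) (hM : 0 ≤ M) (hΨφ₁ : φ₁ ≤ Ψ) (hΨπ : 2 * π ≤ Ψ) (hε : 0 < ε)
    (hΨε : 2 * π * (M * Ψ ^ (-α - 1)) ≤ ε) (hf : DifferentiableOn ℝ f (Ici φ₁))
    (hlim : Tendsto f atTop (𝓝 0)) (hfm : ∀ φ ≥ φ₁, m * φ ^ (-α) ≤ f φ)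
    (hf' : ∀ φ ≥ φ₁, |derivWithin f (Ici φ₁) φ| ≤ M * φ ^ (-α - 1)) :
    ENNReal.ofReal ((m * (2 * Ψ) ^ (-α)) ^ 2) ≤ volume (euclNbhd (polarCurve f '' Ici φ₁) ε) := by
  have hΨ : 0 < Ψ := hφ₁.trans_le hΨφ₁
  set ρ := m * (2 * Ψ) ^ (-α)
  have hρ : 0 ≤ ρ := by positivity
  have hgap : ∀ ψ ≥ Ψ, f ψ - f (ψ + 2 * π) ≤ ε := fun ψ hψ =>
    (sub_add_two_pi_le (by linarith) hφ₁ hM hΨφ₁ hψ hf hf').trans hΨε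
  have hρf : ∀ φ ∈ Ico Ψ (Ψ + 2 * π), ρ ≤ f φ := fun φ hφ =>
    (mul_le_mul_of_nonneg_left (rpow_le_rpow_of_nonpos (hΨ.trans_le hφ.1) (by linarith [hφ.2])
      (neg_nonpos.2 hα)) hm).trans (hfm φ (hΨφ₁.trans hφ.1))
  have hball : ball (0 : ℝ × ℝ) (ρ / 2) ⊆ {y : ℝ × ℝ | √(y.1 ^ 2 + y.2 ^ 2) ≤ ρ} := by
    intro y hy
    rw [mem_ball_zero_iff, Prod.norm_def, max_lt_iff, Real.norm_eq_abs, Real.norm_eq_abs] at hy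
    refine sqrt_le_iff.2 ⟨hρ, ?_⟩
    nlinarith [sq_abs y.1, sq_abs y.2, abs_nonneg y.1, abs_nonneg y.2]
  calc ENNReal.ofReal (ρ ^ 2) = volume (ball (0 : ℝ × ℝ) (ρ / 2)) := by
        rw [volume_ball_prod, ENNReal.ofReal_pow hρ]; ring_nf
    _ ≤ volume (euclNbhd (polarCurve f '' Ici φ₁) ε) := measure_mono <|
        (hball.trans (disk_subset_euclNbhd_polarCurve_image hlim hε hgap hρf)).trans
          (euclNbhd_mono (image_mono (Ici_subset_Ici.2 hΨφ₁)) ε)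

theorem exists_le_volume_euclNbhd_polarCurve_image (hα : 0 ≤ α) (hφ₁ : 0 < φ₁) (hm : 0 < m)
    (hM : 0 < M) (hf : DifferentiableOn ℝ f (Ici φ₁)) (hlim : Tendsto f atTop (𝓝 0))
    (hfm : ∀ φ ≥ φ₁, m * φ ^ (-α) ≤ f φ)
    (hf' : ∀ φ ≥ φ₁, |derivWithin f (Ici φ₁) φ| ≤ M * φ ^ (-α - 1)) :
    ∃ c > 0, ∀ᶠ ε in 𝓝[>] 0,
      ENNReal.ofReal (c * ε ^ (2 - 2 / (1 + α))) ≤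
        volume (euclNbhd (polarCurve f '' Ici φ₁) ε) := by
  have h1α : 0 < 1 + α := by linarith
  set κ := (1 + α)⁻¹ with hκ
  set a := 2 * π * M with ha_def
  have ha : 0 < a := by positivity
  -- the critical angle `φ_ε`
  let Ψ : ℝ → ℝ := fun ε => a ^ κ * ε ^ (-κ)
  have hΨ_tendsto : Tendsto Ψ (𝓝[>] 0) atTop :=
    (tendsto_rpow_neg_nhdsGT_zero (neg_neg_of_pos (inv_pos.2 h1α))).const_mul_atTop (by positivity)
  refine ⟨(m * (2 * a ^ κ) ^ (-α)) ^ 2, by positivity, ?_⟩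
  filter_upwards [hΨ_tendsto.eventually_ge_atTop (max φ₁ (2 * π)), self_mem_nhdsWithin]
    with ε hΨε hε
  have hε : 0 < ε := hε
  have hgap : 2 * π * (M * Ψ ε ^ (-α - 1)) = ε := by
    rw [mul_rpow (by positivity) (by positivity), ← rpow_mul ha.le, ← rpow_mul hε.le,
      show κ * (-α - 1) = -1 by rw [hκ]; field_simp; ring,
      show -κ * (-α - 1) = 1 by rw [hκ]; field_simp; ring, rpow_neg_one, rpow_one, ha_def]
    field_simp
  have hρ : m * (2 * Ψ ε) ^ (-α) = m * (2 * a ^ κ) ^ (-α) * ε ^ (α / (1 + α)) := by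
    rw [← mul_assoc, mul_rpow (by positivity) (by positivity), ← rpow_mul hε.le, mul_assoc]
    congr 3
    rw [hκ]
    field_simp
  convert ofReal_sq_le_volume_euclNbhd_polarCurve_image hα hφ₁ hm.le hM.le
    (le_of_max_le_left hΨε) (le_of_max_le_right hΨε) hε hgap.le hf hlim hfm hf' using 2
  rw [hρ, rpow_two_sub_two_div_one_add h1α.ne' hε]
  ring

theorem dist_polarCurve_le (hα : α < 1) (hφ₁ : 0 < φ₁) (hM : 0 ≤ M)
    (hf : DifferentiableOn ℝ f (Ici φ₁)) (hfm : ∀ φ ≥ φ₁, |f φ| ≤ m * φ ^ (-α))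
    (hf' : ∀ φ ≥ φ₁, |derivWithin f (Ici φ₁) φ| ≤ M * φ ^ (-α - 1)) {x y : ℝ} (hx : φ₁ ≤ x)
    (hxy : x ≤ y) :
    dist (polarCurve f y) (polarCurve f x) ≤
      (m + M / φ₁) / (1 - α) * (y ^ (1 - α) - x ^ (1 - α)) := by
  set K := m + M / φ₁
  rw [dist_eq_norm, mul_sub]
  refine norm_sub_le_sub_of_norm_hasDerivWithinAt_le ordConnected_Ici
    (fun t ht => hasDerivWithinAt_polarCurve (hf t ht).hasDerivWithinAt)
    (B := fun t => K / (1 - α) * t ^ (1 - α)) (B' := fun t => K * t ^ (-α))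
    (fun t ht => ?_) (fun t ht => ?_) hx (hx.trans hxy) hxy
  · have ht0 : t ≠ 0 := (hφ₁.trans_le ht).ne'
    refine ((hasDerivAt_rpow_const (Or.inl ht0)).const_mul (K / (1 - α))).hasDerivWithinAt
      |>.congr_deriv ?_
    rw [sub_sub_cancel_left]
    field_simp [(sub_pos.2 hα).ne']
  · have ht0 : 0 < t := hφ₁.trans_le ht
    have hderiv : M * t ^ (-α - 1) ≤ M / φ₁ * t ^ (-α) := by
      rw [rpow_sub_one ht0.ne', div_mul_eq_mul_div, mul_div_assoc]
      exact mul_le_mul_of_nonneg_left (div_le_div_of_nonneg_left (by positivity) hφ₁ ht) hM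
    calc _ ≤ |derivWithin f (Ici φ₁) t| + |f t| := norm_polarCurve_deriv_le _ _ _
      _ ≤ M / φ₁ * t ^ (-α) + m * t ^ (-α) := add_le_add ((hf' t ht).trans hderiv) (hfm t ht)
      _ = K * t ^ (-α) := by ring

theorem exists_polarCurve_image_subset_closedBall_union {Φ ε : ℝ} (hα₀ : 0 ≤ α) (hα : α < 1)
    (hφ₁ : 0 < φ₁) (hm : 0 ≤ m) (hM : 0 ≤ M) (hΦ : φ₁ ≤ Φ) (hε : 0 < ε)
    (hf : DifferentiableOn ℝ f (Ici φ₁)) (hfm : ∀ φ ≥ φ₁, |f φ| ≤ m * φ ^ (-α))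
    (hf' : ∀ φ ≥ φ₁, |derivWithin f (Ici φ₁) φ| ≤ M * φ ^ (-α - 1)) :
    ∃ c : ℕ → ℝ × ℝ, polarCurve f '' Ici φ₁ ⊆ closedBall 0 (m * Φ ^ (-α)) ∪
      ⋃ i ∈ Finset.range (⌊(m + M / φ₁) / (1 - α) * Φ ^ (1 - α) / ε⌋₊ + 1),
        closedBall (c i) ε := by
  set K := (m + M / φ₁) / (1 - α)
  have hK : 0 ≤ K := div_nonneg (by positivity) (sub_pos.2 hα).le
  let σ : ℝ → ℝ := fun x => K * (x ^ (1 - α) - φ₁ ^ (1 - α))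
  have hσ : ∀ x ∈ Icc φ₁ Φ, σ x ∈ Icc 0 (K * Φ ^ (1 - α)) := fun x hx => by
    have hx₀ : 0 ≤ x := hφ₁.le.trans hx.1
    refine ⟨mul_nonneg hK (sub_nonneg.2 (rpow_le_rpow hφ₁.le hx.1 (by linarith))), ?_⟩
    refine mul_le_mul_of_nonneg_left ?_ hK
    linarith [rpow_le_rpow hx₀ hx.2 (by linarith : 0 ≤ 1 - α), rpow_nonneg hφ₁.le (1 - α)]
  have hdist : ∀ x ∈ Icc φ₁ Φ, ∀ y ∈ Icc φ₁ Φ,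
      dist (polarCurve f x) (polarCurve f y) ≤ |σ x - σ y| := by
    intro x hx y hy
    have hσ_sub : ∀ u v, σ u - σ v = K * (u ^ (1 - α) - v ^ (1 - α)) := fun u v => by ring
    rcases le_total x y with hxy | hyx
    · rw [dist_comm, abs_sub_comm, hσ_sub]
      exact (dist_polarCurve_le hα hφ₁ hM hf hfm hf' hx.1 hxy).trans (le_abs_self _)
    · rw [hσ_sub]
      exact (dist_polarCurve_le hα hφ₁ hM hf hfm hf' hy.1 hyx).trans (le_abs_self _)
  obtain ⟨c, hc⟩ := exists_image_subset_biUnion_closedBall hε hσ hdist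
  refine ⟨c, ?_⟩
  rintro _ ⟨φ, hφ, rfl⟩
  rcases le_total φ Φ with hφΦ | hΦφ
  · exact Or.inr (hc ⟨φ, ⟨hφ, hφΦ⟩, rfl⟩)
  · refine Or.inl (mem_closedBall_zero_iff.2 ((norm_polarCurve_le f φ).trans ((hfm φ hφ).trans ?_)))
    exact mul_le_mul_of_nonneg_left
      (rpow_le_rpow_of_nonpos (hφ₁.trans_le hΦ) hΦφ (neg_nonpos.2 hα₀)) hm

theorem volume_euclNbhd_polarCurve_image_le {Φ ε : ℝ} (hα₀ : 0 ≤ α) (hα : α < 1)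
    (hφ₁ : 0 < φ₁) (hm : 0 ≤ m) (hM : 0 ≤ M) (hΦ : φ₁ ≤ Φ) (hε : 0 < ε)
    (hf : DifferentiableOn ℝ f (Ici φ₁)) (hfm : ∀ φ ≥ φ₁, |f φ| ≤ m * φ ^ (-α))
    (hf' : ∀ φ ≥ φ₁, |derivWithin f (Ici φ₁) φ| ≤ M * φ ^ (-α - 1)) :
    volume (euclNbhd (polarCurve f '' Ici φ₁) ε) ≤ ENNReal.ofReal ((2 * (ε + m * Φ ^ (-α))) ^ 2 +
      (⌊(m + M / φ₁) / (1 - α) * Φ ^ (1 - α) / ε⌋₊ + 1 : ℕ) * (4 * ε) ^ 2) := by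
  obtain ⟨c, hc⟩ := exists_polarCurve_image_subset_closedBall_union hα₀ hα hφ₁ hm hM hΦ hε hf
    hfm hf'
  exact (measure_mono (euclNbhd_subset_thickening _ ε)).trans
    (volume_thickening_le_of_subset_closedBall_union
      (mul_nonneg hm (rpow_nonneg (hφ₁.le.trans hΦ) _)) hε hc)

theorem exists_volume_euclNbhd_polarCurve_image_le (hα₀ : 0 ≤ α) (hα : α < 1) (hφ₁ : 0 < φ₁)
    (hm : 0 ≤ m) (hM : 0 ≤ M) (hf : DifferentiableOn ℝ f (Ici φ₁))
    (hfm : ∀ φ ≥ φ₁, |f φ| ≤ m * φ ^ (-α))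
    (hf' : ∀ φ ≥ φ₁, |derivWithin f (Ici φ₁) φ| ≤ M * φ ^ (-α - 1)) :
    ∃ C, ∀ᶠ ε in 𝓝[>] 0,
      volume (euclNbhd (polarCurve f '' Ici φ₁) ε) ≤
        ENNReal.ofReal (C * ε ^ (2 - 2 / (1 + α))) := by
  have h1α : 0 < 1 + α := by linarith
  set K := (m + M / φ₁) / (1 - α)
  have hK : 0 ≤ K := div_nonneg (by positivity) (sub_pos.2 hα).le
  -- the critical angle `φ_ε`
  let Φ : ℝ → ℝ := fun ε => ε ^ (-(1 + α)⁻¹)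
  have hΦ_tendsto : Tendsto Φ (𝓝[>] 0) atTop :=
    tendsto_rpow_neg_nhdsGT_zero (neg_neg_of_pos (inv_pos.2 h1α))
  refine ⟨4 * (1 + m) ^ 2 + 16 * (K + 1), ?_⟩
  filter_upwards [hΦ_tendsto.eventually_ge_atTop φ₁, Ioo_mem_nhdsGT one_pos] with ε hφ₁Φ hε
  obtain ⟨hε, hε₁⟩ := hε
  set e := ε ^ (α / (1 + α))
  have hΦα : Φ ε ^ (-α) = e := by
    rw [← rpow_mul hε.le]
    congr 1
    field_simp
  have hΦε : Φ ε ^ (1 - α) * ε = e ^ 2 := by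
    rw [← rpow_mul hε.le, ← rpow_natCast, ← rpow_mul hε.le, ← rpow_add_one hε.ne']
    congr 1
    field_simp
    ring
  have hεe : ε ≤ e := by
    simpa using rpow_le_rpow_of_exponent_ge hε hε₁.le
      ((div_le_one h1α).2 (by linarith) : α / (1 + α) ≤ 1)
  have hN : (⌊K * Φ ε ^ (1 - α) / ε⌋₊ : ℝ) ≤ K * Φ ε ^ (1 - α) / ε :=
    Nat.floor_le (by positivity)
  refine (volume_euclNbhd_polarCurve_image_le hα₀ hα hφ₁ hm hM hφ₁Φ hε hf hfm hf').trans
    (ENNReal.ofReal_le_ofReal ?_)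
  rw [hΦα, rpow_two_sub_two_div_one_add h1α.ne' hε, Nat.cast_add_one]
  calc (2 * (ε + m * e)) ^ 2 + (⌊K * Φ ε ^ (1 - α) / ε⌋₊ + 1) * (4 * ε) ^ 2
      ≤ (2 * ((1 + m) * e)) ^ 2 + (K * Φ ε ^ (1 - α) / ε + 1) * (4 * ε) ^ 2 := by
        gcongr
        linarith
    _ = 4 * (1 + m) ^ 2 * e ^ 2 + 16 * (K * (Φ ε ^ (1 - α) * ε) + ε ^ 2) := by
        field_simp
        ring
    _ ≤ (4 * (1 + m) ^ 2 + 16 * (K + 1)) * e ^ 2 := by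
        rw [hΦε]
        nlinarith [pow_le_pow_left₀ hε.le hεe 2]

end Spiral

theorem box_dimension_of_smooth_spiral_general
    (α φ₁ : ℝ) (hα : α ∈ Set.Ioo (0 : ℝ) 1) (hφ₁ : 0 < φ₁)
    (f : ℝ → ℝ)
    (hf_pos : ∀ φ ≥ φ₁, 0 < f φ)
    (hf_smooth : ContDiffOn ℝ 2 f (Set.Ici φ₁))
    (hf_lim : Filter.Tendsto f Filter.atTop (nhds 0))
    (m m' M₁ M₂ : ℝ)
    (hm : 0 < m) (hm' : 0 < m') (hM₂ : 0 < M₂)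
    (hf_bound : ∀ φ ≥ φ₁, m * φ ^ (-α) ≤ f φ ∧ f φ ≤ m' * φ ^ (-α))
    (hf'_bound : ∀ φ ≥ φ₁,
      M₁ * φ ^ (-α - 1) ≤ |derivWithin f (Set.Ici φ₁) φ| ∧
      |derivWithin f (Set.Ici φ₁) φ| ≤ M₂ * φ ^ (-α - 1))
    (Γ : Set (ℝ × ℝ))
    (hΓ : Γ = {P : ℝ × ℝ | ∃ φ ≥ φ₁, P = (f φ * Real.cos φ, f φ * Real.sin φ)}) :
    lowerBoxDim Γ = 2 / (1 + α) ∧ upperBoxDim Γ = 2 / (1 + α) := by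
  obtain ⟨hα₀, hα₁⟩ := hα
  have hΓ_eq : Γ = polarCurve f '' Ici φ₁ := by
    rw [hΓ]
    ext P
    simp [polarCurve, eq_comm]
  have hf : DifferentiableOn ℝ f (Ici φ₁) := hf_smooth.differentiableOn (by norm_num)
  have hf'_le : ∀ φ ≥ φ₁, |derivWithin f (Ici φ₁) φ| ≤ M₂ * φ ^ (-α - 1) :=
    fun φ hφ => (hf'_bound φ hφ).2
  obtain ⟨c, hc, hlower⟩ := exists_le_volume_euclNbhd_polarCurve_image hα₀.le hφ₁ hm hM₂ hf
    hf_lim (fun φ hφ => (hf_bound φ hφ).1) hf'_le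
  obtain ⟨C, hupper⟩ := exists_volume_euclNbhd_polarCurve_image_le hα₀.le hα₁ hφ₁ hm'.le hM₂.le
    hf (fun φ hφ => (abs_of_pos (hf_pos φ hφ)).trans_le (hf_bound φ hφ).2) hf'_le
  rw [hΓ_eq]
  exact boxDim_eq_of_volume_euclNbhd_bounds (by positivity) hc hlower hupper

/-- Box dimension of a smooth nonincreasing spiral
(Theorem 5 of Žubrinić–Županović, cited as Theorem `ffa`). -/
theorem box_dimension_of_smooth_spiral
    (α φ₁ : ℝ) (hα : α ∈ Set.Ioo (0 : ℝ) 1) (hφ₁ : 0 < φ₁)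
    (f : ℝ → ℝ)
    (hf_pos : ∀ φ ≥ φ₁, 0 < f φ)
    (hf_smooth : ContDiffOn ℝ 2 f (Set.Ici φ₁))
    (hf_anti : AntitoneOn f (Set.Ici φ₁))
    (hf_lim : Filter.Tendsto f Filter.atTop (nhds 0))
    (m m' M₁ M₂ M₃ : ℝ)
    (hm : 0 < m) (hm' : 0 < m') (hM₁ : 0 < M₁) (hM₂ : 0 < M₂) (hM₃ : 0 < M₃)
    (hf_bound : ∀ φ ≥ φ₁, m * φ ^ (-α) ≤ f φ ∧ f φ ≤ m' * φ ^ (-α))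
    (hf'_bound : ∀ φ ≥ φ₁,
      M₁ * φ ^ (-α - 1) ≤ |derivWithin f (Set.Ici φ₁) φ| ∧
      |derivWithin f (Set.Ici φ₁) φ| ≤ M₂ * φ ^ (-α - 1))
    (hf''_bound : ∀ φ ≥ φ₁,
      |derivWithin (derivWithin f (Set.Ici φ₁)) (Set.Ici φ₁) φ| ≤ M₃ * φ ^ (-α))
    (Γ : Set (ℝ × ℝ))
    (hΓ : Γ = {P : ℝ × ℝ | ∃ φ ≥ φ₁, P = (f φ * Real.cos φ, f φ * Real.sin φ)}) :
    lowerBoxDim Γ = 2 / (1 + α) ∧ upperBoxDim Γ = 2 / (1 + α) :=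
  box_dimension_of_smooth_spiral_general α φ₁ hα hφ₁ f hf_pos hf_smooth hf_lim m m' M₁ M₂ hm hm' hM₂
    hf_bound hf'_bound Γ hΓ
end

section
/- Let α > 1, t₀ > 0, and let p : [t₀,∞) → (0,∞) be a C³ function with p(t)·t^{α} → 1, p′(t)/(−α t^{−α−1}) → 1, p″(t)/(α(α+1) t^{−α−2}) → 1 and p‴(t)/(−α(α+1)(α+2) t^{−α−3}) → 1 as t → ∞ (i.e. p(t) ∼₃ t^{−α}). Define x : [t₀,∞) → ℝ by x(t) = p(t)·sin t, so x′(t) = p′(t)·sin t + p(t)·cos t. Then the planar curve t ↦ (x(t), x′(t)), t ∈ [t₀,∞), is rectifiable: sup{ Σ_{i=1}^{m} ‖(x(uᵢ), x′(uᵢ)) − (x(u_{i−1}), x′(u_{i−1}))‖ : t₀ ≤ u₀ < u₁ < … < u_m, m ∈ ℕ } < ∞. -/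
/-!
Model the phase plane as `ℂ`, whose metric is the Euclidean one, so that the phase curve is
`γ = x + i x'`. On `(t₀, ∞)` its speed is at most `|x'| + |x''|`, and `p, p', p''` are all
`O(t^{-α})` there: at infinity by the asymptotics, and near `t₀` because they extend continuously
to `[t₀, ∞)`. Since `α > 1`, `|γ'|` is then dominated by the derivative of the bounded increasing
function `-C t^{1-α}/(α - 1)`, so `γ` has bounded variation on `(t₀, ∞)`. At `t₀` itself
`x'(t₀)` involves `deriv p t₀`, which need not be the one-sided derivative; adding that point only
adds the jump from `γ t₀` to the right limit of `γ`, which exists by completeness.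
-/

open Set Filter Real Topology Asymptotics

section Variation

variable {α E : Type*} [LinearOrder α]

theorem eVariationOn_le_of_dist_le_sub [PseudoMetricSpace E] {f : α → E} {g : α → ℝ}
    {s : Set α} (h : ∀ x ∈ s, ∀ y ∈ s, x ≤ y → dist (f x) (f y) ≤ g y - g x) :
    eVariationOn f s ≤ eVariationOn g s := by
  refine iSup_mono fun ⟨n, u, hu, us⟩ => Finset.sum_le_sum fun i _ => ?_
  rw [edist_dist, edist_dist, dist_comm, Real.dist_eq]
  exact ENNReal.ofReal_le_ofReal
    ((h _ (us i) _ (us (i + 1)) (hu i.le_succ)).trans (le_abs_self _))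

theorem BoundedVariationOn.sum_dist_le [PseudoMetricSpace E] {f : α → E} {s : Set α}
    (hf : BoundedVariationOn f s) {u : ℕ → α} (hu : Monotone u) (us : ∀ i, u i ∈ s) (n : ℕ) :
    ∑ i ∈ Finset.range n, dist (f (u (i + 1))) (f (u i)) ≤ (eVariationOn f s).toReal := by
  simp only [dist_edist]
  rw [← ENNReal.toReal_sum fun _ _ => edist_ne_top _ _]
  exact ENNReal.toReal_mono hf (eVariationOn.sum_le hu us)

theorem BoundedVariationOn.Ici_of_Ioi [TopologicalSpace α] [OrderTopology α] [DenselyOrdered α]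
    [NoMaxOrder α] [PseudoMetricSpace E] [CompleteSpace E] {f : α → E} {a : α}
    (hf : BoundedVariationOn f (Ioi a)) : BoundedVariationOn f (Ici a) := by
  obtain ⟨l, hl⟩ := hf.exists_tendsto_right a
  rw [inter_self] at hl
  have h := eVariationOn.eVariationOn_on_inter_Ici_eq_Ioi_add_edist (s := univ)
    (by rw [univ_inter]; exact nhdsGT_neBot a) (mem_univ a) (by rwa [univ_inter])
  rw [univ_inter, univ_inter] at h
  rw [BoundedVariationOn, h]
  exact ENNReal.add_ne_top.2 ⟨hf, edist_ne_top _ _⟩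

end Variation

section MeanValue

variable {E : Type*} [NormedAddCommGroup E] [NormedSpace ℝ E]

theorem dist_le_sub_of_norm_deriv_le {f f' : ℝ → E} {g g' : ℝ → ℝ} {a b : ℝ} (hab : a ≤ b)
    (hf : ∀ t ∈ Icc a b, HasDerivAt f (f' t) t) (hg : ∀ t ∈ Icc a b, HasDerivAt g (g' t) t)
    (bound : ∀ t ∈ Icc a b, ‖f' t‖ ≤ g' t) : dist (f a) (f b) ≤ g b - g a := by
  rw [dist_comm, dist_eq_norm]
  refine image_norm_le_of_norm_deriv_right_le_deriv_boundary' (f := fun t => f t - f a)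
    (B := fun t => g t - g a) (fun t ht => ((hf t ht).sub_const _).continuousAt.continuousWithinAt)
    (fun t ht => ((hf t (Ico_subset_Icc_self ht)).sub_const _).hasDerivWithinAt) (by simp)
    (fun t ht => ((hg t ht).sub_const _).continuousAt.continuousWithinAt)
    (fun t ht => ((hg t (Ico_subset_Icc_self ht)).sub_const _).hasDerivWithinAt)
    (fun t ht => bound t (Ico_subset_Icc_self ht)) (right_mem_Icc.2 hab)

theorem boundedVariationOn_of_norm_deriv_le {f f' : ℝ → E} {g g' : ℝ → ℝ} {s : Set ℝ} {C : ℝ}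
    (hs : s.OrdConnected) (hf : ∀ t ∈ s, HasDerivAt f (f' t) t)
    (hg : ∀ t ∈ s, HasDerivAt g (g' t) t) (bound : ∀ t ∈ s, ‖f' t‖ ≤ g' t)
    (hC : ∀ t ∈ s, |g t| ≤ C) : BoundedVariationOn f s := by
  have hdist : ∀ x ∈ s, ∀ y ∈ s, x ≤ y → dist (f x) (f y) ≤ g y - g x :=
    fun x hx y hy hxy => dist_le_sub_of_norm_deriv_le hxy (fun t ht => hf t (hs.out hx hy ht))
      (fun t ht => hg t (hs.out hx hy ht)) (fun t ht => bound t (hs.out hx hy ht))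
  have hmono : MonotoneOn g s := fun x hx y hy hxy =>
    sub_nonneg.1 (dist_nonneg.trans (hdist x hx y hy hxy))
  exact ne_top_of_le_ne_top (hmono.boundedVariationOn hC) (eVariationOn_le_of_dist_le_sub hdist)

theorem boundedVariationOn_Ioi_of_isBigO_rpow {f f' : ℝ → E} {a α : ℝ} (hα : 1 < α) (ha : 0 < a)
    (hf : ∀ t ∈ Ioi a, HasDerivAt f (f' t) t) (hO : f' =O[𝓟 (Ioi a)] fun t => t ^ (-α)) :
    BoundedVariationOn f (Ioi a) := by
  obtain ⟨c, hc⟩ := isBigO_principal.1 hO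
  have hα' : 1 - α ≠ 0 := by linarith
  refine boundedVariationOn_of_norm_deriv_le ordConnected_Ioi hf
    (g := fun t => c / (1 - α) * t ^ (1 - α)) (g' := fun t => c * t ^ (-α))
    (C := |c / (1 - α)| * a ^ (1 - α)) (fun t ht => ?_) (fun t ht => ?_) (fun t ht => ?_)
  · have ht0 : t ≠ 0 := (ha.trans ht).ne'
    refine ((hasDerivAt_rpow_const (p := 1 - α) (Or.inl ht0)).const_mul _).congr_deriv ?_
    rw [sub_sub_cancel_left]
    field_simp
  · simpa [abs_of_pos (rpow_pos_of_pos (ha.trans ht) _)] using hc t ht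
  · rw [abs_mul, abs_of_pos (rpow_pos_of_pos (ha.trans ht) _)]
    exact mul_le_mul_of_nonneg_left (rpow_le_rpow_of_nonpos ha ht.le (by linarith))
      (abs_nonneg _)

end MeanValue

section Asymptotics

theorem isBigO_rpow_of_tendsto_div {f : ℝ → ℝ} {c β : ℝ} (hc : c ≠ 0)
    (h : Tendsto (fun s => f s / (c * s ^ β)) atTop (𝓝 1)) : f =O[atTop] fun s => s ^ β := by
  refine (isBigO_of_div_tendsto_nhds ?_ 1 h).trans (isBigO_const_mul_self c _ _)
  filter_upwards [eventually_gt_atTop 0] with s hs h0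
  exact absurd h0 (mul_ne_zero hc (rpow_pos_of_pos hs β).ne')

theorem isBigO_rpow_rpow_atTop {β γ : ℝ} (h : β ≤ γ) :
    (fun s : ℝ => s ^ β) =O[atTop] fun s => s ^ γ := by
  refine IsBigO.of_bound 1 ?_
  filter_upwards [eventually_ge_atTop 1] with s hs
  rw [one_mul, norm_of_nonneg (rpow_nonneg (by linarith) _),
    norm_of_nonneg (rpow_nonneg (by linarith) _)]
  exact rpow_le_rpow_of_exponent_le hs h

variable {E F : Type*} [NormedAddCommGroup E] [NormedAddCommGroup F]

theorem Asymptotics.IsBigO.mul_of_abs_le_one {ι : Type*} {l : Filter ι} {f b : ι → ℝ}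
    {g : ι → F} (h : f =O[l] g) (hb : ∀ i, |b i| ≤ 1) : (fun i => f i * b i) =O[l] g :=
  IsBigO.trans (IsBigO.of_bound 1 <| Eventually.of_forall fun i => by
    rw [one_mul, norm_mul, norm_eq_abs (b i)]
    exact mul_le_of_le_one_right (norm_nonneg _) (hb i)) h

theorem Asymptotics.IsBigO.principal_Ioi_of_atTop {f g : ℝ → E} {w : ℝ → F} {a : ℝ}
    (hg : ContinuousOn g (Ici a)) (hfg : EqOn f g (Ioi a)) (hw : ContinuousOn w (Ici a))
    (hw0 : ∀ s ∈ Ici a, w s ≠ 0) (hO : f =O[atTop] w) : f =O[𝓟 (Ioi a)] w := by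
  obtain ⟨c, hc⟩ := hO.bound
  obtain ⟨T, hT⟩ := eventually_atTop.1 hc
  have hfar : f =O[𝓟 (Ici T)] w := isBigO_principal.2 ⟨c, hT⟩
  have hnear : g =O[𝓟 (Icc a T)] w :=
    ((hg.mono Icc_subset_Ici_self).isBigO_principal isCompact_Icc (c := (1 : ℝ)) (by simp)).trans
      ((hw.mono Icc_subset_Ici_self).isBigO_rev_principal isCompact_Icc
        (fun s hs => hw0 s hs.1) 1)
  have hnear' : f =O[𝓟 (Ioc a T)] w :=
    (hnear.mono (principal_mono.2 Ioc_subset_Icc_self)).congr'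
      (eventuallyEq_principal.2 fun s hs => (hfg hs.1).symm) EventuallyEq.rfl
  refine (hnear'.sup hfar).mono ?_
  rw [sup_principal]
  refine principal_mono.2 fun s hs => ?_
  rcases le_total s T with h | h
  exacts [Or.inl ⟨hs, h⟩, Or.inr h]

end Asymptotics

theorem eqOn_deriv_derivWithin_Ici {E : Type*} [NormedAddCommGroup E] [NormedSpace ℝ E]
    {f g : ℝ → E} {a : ℝ} (h : EqOn f g (Ioi a)) :
    EqOn (deriv f) (derivWithin g (Ici a)) (Ioi a) := fun _ hs =>
  (h.deriv isOpen_Ioi hs).trans (derivWithin_of_mem_nhds (Ici_mem_nhds hs)).symm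

theorem ContDiffOn.hasDerivAt_deriv {E : Type*} [NormedAddCommGroup E] [NormedSpace ℝ E]
    {f : ℝ → E} {s : Set ℝ} {n : WithTop ℕ∞} (hf : ContDiffOn ℝ n f s) (hs : IsOpen s)
    (hn : n ≠ 0) : ∀ t ∈ s, HasDerivAt f (deriv f t) t := fun _ ht =>
  ((hf.differentiableOn hn).differentiableAt (hs.mem_nhds ht)).hasDerivAt

theorem isBigO_chirp_amplitude {α t₀ : ℝ} (hα : 0 < α) (ht₀ : 0 < t₀) {p : ℝ → ℝ}
    (hp : ContDiffOn ℝ 2 p (Ici t₀))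
    (hp0 : Tendsto (fun s => p s * s ^ α) atTop (𝓝 1))
    (hp1 : Tendsto (fun s => deriv p s / (-α * s ^ (-α - 1))) atTop (𝓝 1))
    (hp2 : Tendsto (fun s => deriv (deriv p) s / (α * (α + 1) * s ^ (-α - 2))) atTop (𝓝 1)) :
    p =O[𝓟 (Ioi t₀)] (fun s => s ^ (-α)) ∧ deriv p =O[𝓟 (Ioi t₀)] (fun s => s ^ (-α)) ∧
      deriv (deriv p) =O[𝓟 (Ioi t₀)] (fun s => s ^ (-α)) := by
  have hw : ContinuousOn (fun s : ℝ => s ^ (-α)) (Ici t₀) :=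
    continuousOn_id.rpow_const fun s hs => Or.inl (ht₀.trans_le hs).ne'
  have hw0 : ∀ s ∈ Ici t₀, s ^ (-α) ≠ 0 := fun s hs => (rpow_pos_of_pos (ht₀.trans_le hs) _).ne'
  have hd1 := eqOn_deriv_derivWithin_Ici (eqOn_refl p (Ioi t₀))
  have hd2 := eqOn_deriv_derivWithin_Ici hd1
  have hc1 := hp.derivWithin (uniqueDiffOn_Ici t₀) (m := 1) (by norm_num)
  have hc2 := hc1.derivWithin (uniqueDiffOn_Ici t₀) (m := 0) (by norm_num)
  have hp0' : Tendsto (fun s => p s / (1 * s ^ (-α))) atTop (𝓝 1) := by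
    refine hp0.congr' ?_
    filter_upwards [eventually_gt_atTop 0] with s hs
    rw [one_mul, rpow_neg hs.le, div_inv_eq_mul]
  refine ⟨?_, ?_, ?_⟩
  · exact (isBigO_rpow_of_tendsto_div one_ne_zero hp0').principal_Ioi_of_atTop
      hp.continuousOn (eqOn_refl p _) hw hw0
  · exact ((isBigO_rpow_of_tendsto_div (neg_ne_zero.2 hα.ne') hp1).trans
      (isBigO_rpow_rpow_atTop (by linarith))).principal_Ioi_of_atTop hc1.continuousOn hd1 hw hw0
  · exact ((isBigO_rpow_of_tendsto_div (by positivity) hp2).trans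
      (isBigO_rpow_rpow_atTop (by linarith))).principal_Ioi_of_atTop hc2.continuousOn hd2 hw hw0

theorem HasDerivAt.ofReal_add_ofReal_mul_I {f g : ℝ → ℝ} {f' g' t : ℝ} (hf : HasDerivAt f f' t)
    (hg : HasDerivAt g g' t) :
    HasDerivAt (fun s => (f s : ℂ) + g s * Complex.I) (f' + g' * Complex.I) t :=
  hf.ofReal_comp.add (hg.ofReal_comp.mul_const _)

theorem boundedVariationOn_phase_curve {x x' x'' : ℝ → ℝ} {a α : ℝ} (hα : 1 < α) (ha : 0 < a)
    (hx : ∀ s ∈ Ioi a, HasDerivAt x (x' s) s) (hx' : ∀ s ∈ Ioi a, HasDerivAt x' (x'' s) s)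
    (h1 : x' =O[𝓟 (Ioi a)] fun s => s ^ (-α)) (h2 : x'' =O[𝓟 (Ioi a)] fun s => s ^ (-α)) :
    BoundedVariationOn (fun s => (x s : ℂ) + x' s * Complex.I) (Ici a) := by
  have hO : (fun s => (x' s : ℂ) + x'' s * Complex.I) =O[𝓟 (Ioi a)] fun s => s ^ (-α) := by
    refine IsBigO.trans ?_ (h1.norm_left.add h2.norm_left)
    refine isBigO_of_le _ fun s => (Complex.norm_le_abs_re_add_abs_im _).trans ?_
    simpa using le_abs_self _
  exact (boundedVariationOn_Ioi_of_isBigO_rpow hα ha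
    (fun s hs => (hx s hs).ofReal_add_ofReal_mul_I (hx' s hs)) hO).Ici_of_Ioi

theorem exists_sum_sqrt_le_of_boundedVariationOn {x y : ℝ → ℝ} {s : Set ℝ}
    (h : BoundedVariationOn (fun t => (x t : ℂ) + y t * Complex.I) s) :
    ∃ L : ℝ, ∀ (m : ℕ) (u : ℕ → ℝ), Monotone u → (∀ i, u i ∈ s) →
      ∑ i ∈ Finset.range m,
        √((x (u (i + 1)) - x (u i)) ^ 2 + (y (u (i + 1)) - y (u i)) ^ 2) ≤ L :=
  ⟨_, fun m u hu us => by
    simpa only [Complex.dist_eq_re_im, Complex.add_re, Complex.add_im, Complex.ofReal_re,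
      Complex.ofReal_im, Complex.re_ofReal_mul, Complex.im_ofReal_mul, Complex.I_re,
      Complex.I_im, mul_zero, mul_one, add_zero, zero_add] using h.sum_dist_le hu us m⟩

theorem phase_curve_rectifiable_of_chirp_general
    (α t₀ : ℝ) (hα : 1 < α) (ht₀ : 0 < t₀)
    (p : ℝ → ℝ)
    (hp_smooth : ContDiffOn ℝ 3 p (Set.Ici t₀))
    -- p(t) ∼₃ t^{-α} as t → ∞
    (hp0 : Filter.Tendsto (fun s => p s * s ^ α) Filter.atTop (nhds 1))
    (hp1 : Filter.Tendsto (fun s => deriv p s / (-α * s ^ (-α - 1)))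
      Filter.atTop (nhds 1))
    (hp2 : Filter.Tendsto (fun s => deriv (deriv p) s / (α * (α + 1) * s ^ (-α - 2)))
      Filter.atTop (nhds 1))
    (x x' : ℝ → ℝ)
    (hx : ∀ s, x s = p s * Real.sin s)
    (hx' : ∀ s, x' s = deriv p s * Real.sin s + p s * Real.cos s) :
    ∃ L : ℝ, ∀ (m : ℕ) (u : ℕ → ℝ), t₀ ≤ u 0 → StrictMono u →
      ∑ i ∈ Finset.range m,
        Real.sqrt ((x (u (i + 1)) - x (u i)) ^ 2 + (x' (u (i + 1)) - x' (u i)) ^ 2) ≤ L := by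
  obtain rfl : x = fun s => p s * sin s := funext hx
  obtain rfl : x' = fun s => deriv p s * sin s + p s * cos s := funext hx'
  have hC : ContDiffOn ℝ 2 p (Ioi t₀) := (hp_smooth.mono Ioi_subset_Ici_self).of_le (by norm_num)
  have hp := hC.hasDerivAt_deriv isOpen_Ioi two_ne_zero
  have hp' := (hC.deriv_of_isOpen isOpen_Ioi le_rfl).hasDerivAt_deriv isOpen_Ioi one_ne_zero
  obtain ⟨h0, h1, h2⟩ :=
    isBigO_chirp_amplitude (by linarith) ht₀ (hp_smooth.of_le (by norm_num)) hp0 hp1 hp2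
  have habs_neg_sin (s : ℝ) : |-sin s| ≤ 1 := (abs_neg _).trans_le (abs_sin_le_one s)
  have hbv := boundedVariationOn_phase_curve hα ht₀
    (fun s hs => (hp s hs).mul (hasDerivAt_sin s))
    (fun s hs => ((hp' s hs).mul (hasDerivAt_sin s)).add ((hp s hs).mul (hasDerivAt_cos s)))
    ((h1.mul_of_abs_le_one abs_sin_le_one).add (h0.mul_of_abs_le_one abs_cos_le_one))
    (((h2.mul_of_abs_le_one abs_sin_le_one).add (h1.mul_of_abs_le_one abs_cos_le_one)).add
      ((h1.mul_of_abs_le_one abs_cos_le_one).add (h0.mul_of_abs_le_one habs_neg_sin)))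
  obtain ⟨L, hL⟩ := exists_sum_sqrt_le_of_boundedVariationOn hbv
  exact ⟨L, fun m u hu0 hu => hL m u hu.monotone fun i => hu0.trans (hu.monotone i.zero_le)⟩

/-- Chirp–spiral comparison, part (ii) of Theorem `s-c-p`:
for `α > 1` the phase curve `t ↦ (x(t), x′(t))` of `x(t) = p(t) sin t`,
`p(t) ∼₃ t^{-α}`, is rectifiable: the sums of Euclidean lengths over finite
increasing sequences of parameters in `[t₀,∞)` are uniformly bounded. -/
theorem phase_curve_rectifiable_of_chirp
    (α t₀ : ℝ) (hα : 1 < α) (ht₀ : 0 < t₀)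
    (p : ℝ → ℝ)
    (hp_pos : ∀ s ≥ t₀, 0 < p s)
    (hp_smooth : ContDiffOn ℝ 3 p (Set.Ici t₀))
    -- p(t) ∼₃ t^{-α} as t → ∞
    (hp0 : Filter.Tendsto (fun s => p s * s ^ α) Filter.atTop (nhds 1))
    (hp1 : Filter.Tendsto (fun s => deriv p s / (-α * s ^ (-α - 1)))
      Filter.atTop (nhds 1))
    (hp2 : Filter.Tendsto (fun s => deriv (deriv p) s / (α * (α + 1) * s ^ (-α - 2)))
      Filter.atTop (nhds 1))
    (hp3 : Filter.Tendsto
      (fun s => deriv (deriv (deriv p)) s / (-(α * (α + 1) * (α + 2)) * s ^ (-α - 3)))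
      Filter.atTop (nhds 1))
    (x x' : ℝ → ℝ)
    (hx : ∀ s, x s = p s * Real.sin s)
    (hx' : ∀ s, x' s = deriv p s * Real.sin s + p s * Real.cos s) :
    ∃ L : ℝ, ∀ (m : ℕ) (u : ℕ → ℝ), t₀ ≤ u 0 → StrictMono u →
      ∑ i ∈ Finset.range m,
        Real.sqrt ((x (u (i + 1)) - x (u i)) ^ 2 + (x' (u (i + 1)) - x' (u i)) ^ 2) ≤ L :=
  phase_curve_rectifiable_of_chirp_general α t₀ hα ht₀ p hp_smooth hp0 hp1 hp2 x x' hx hx'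
end

section
/- Let t₀ > 0 and let p : [t₀,∞) → (0,∞) be a C² function with p′(t)/p(t) → 0 and p″(t)/p(t) → 0 as t → ∞. Set x(t) = p(t)·sin t, x′(t) = p′(t)·sin t + p(t)·cos t, and r(t) = √(x(t)² + x′(t)²) > 0. Let φ : [t₀,∞) → ℝ be a continuous function satisfying (x(t), −x′(t)) = r(t)·(cos φ(t), sin φ(t)) for all t ≥ t₀ (such φ exists and is C¹ since (x, −x′) is C¹ and never vanishes). Then φ′(t) → 1 as t → ∞, and moreover r(t)/p(t) → 1 as t → ∞. -/
/-! With `z = x - i x′`, near any `t` the angle `φ` equals `φ t + Im log (z / z t)`, so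
`φ′ = Im (z′ / z) = (x′² - x x″) / (x² + x′²)`. Dividing by `p²` and writing `a = p′/p`,
`b = p″/p`, the numerator becomes `1 + (a² - b) sin² t` and the denominator
`1 + a² sin² t + a sin 2t = (r/p)²`; both tend to `1` because `a, b → 0`. -/

open Set Filter Real
open scoped Topology

open Complex in
theorem eventuallyEq_of_exp_mul_I_eq {X : Type*} [TopologicalSpace X] {f g : X → ℝ} {x : X}
    (hf : ContinuousAt f x) (hg : ContinuousAt g x) (hfg : f x = g x)
    (hexp : ∀ᶠ y in 𝓝 x, exp (f y * I) = exp (g y * I)) : f =ᶠ[𝓝 x] g := by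
  have hsmall : ∀ᶠ y in 𝓝 x, |f y - g y| < 2 * π := by
    have := (hf.sub hg).eventually (Metric.ball_mem_nhds (f x - g x) two_pi_pos)
    simpa [hfg, Real.dist_eq] using this
  filter_upwards [hsmall, hexp] with y hy he
  obtain ⟨n, hn⟩ := exp_eq_exp_iff_exists_int.1 he
  have hdiff : f y - g y = n * (2 * π) := by
    have : f y = g y + n * (2 * π) := by simpa using congrArg im hn
    linarith
  have hn0 : n = 0 := by
    rw [hdiff, abs_mul, abs_of_pos two_pi_pos] at hy
    have : |(n : ℝ)| < 1 := by nlinarith [two_pi_pos]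
    exact Int.abs_lt_one_iff.1 (by exact_mod_cast this)
  simpa [hn0, sub_eq_zero] using hdiff

open Complex in
theorem hasDerivAt_of_eq_norm_mul_exp_mul_I {z : ℝ → ℂ} {z' : ℂ} {θ : ℝ → ℝ} {t : ℝ}
    (hz : HasDerivAt z z' t) (hzt : z t ≠ 0) (hθ : ContinuousAt θ t)
    (hpolar : ∀ᶠ s in 𝓝 t, z s = ‖z s‖ * exp (θ s * I)) :
    HasDerivAt θ (z' / z t).im t := by
  set w : ℝ → ℂ := fun s => z s / z t
  have hwt : w t = 1 := div_self hzt
  have hlog : HasDerivAt (fun s => log (w s)) (z' / z t) t := by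
    simpa [w, hzt] using (hz.div_const (z t)).clog_real (by simp [hzt])
  -- a differentiable lift of the angle, equal to `θ` near `t` since both are continuous lifts
  set ψ : ℝ → ℝ := fun s => θ t + (log (w s)).im
  have hψ : HasDerivAt ψ (z' / z t).im t :=
    (imCLM.hasFDerivAt.comp_hasDerivAt t hlog).const_add (θ t)
  refine hψ.congr_of_eventuallyEq (eventuallyEq_of_exp_mul_I_eq hθ hψ.continuousAt
    (by simp [ψ, hwt]) ?_)
  filter_upwards [hpolar, hz.continuousAt.eventually_ne hzt] with s hs hs0
  -- `exp (i Im log w) = w / ‖w‖`, and `w s / ‖w s‖ = exp (i θ s) / exp (i θ t)` by `hpolar`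
  have hw : ‖w s‖ * exp ((log (w s)).im * I) = w s := by
    rw [log_im]; exact norm_mul_exp_arg_mul_I _
  have hzs : (‖z s‖ : ℂ) ≠ 0 := by simpa using hs0
  have hzt' : (‖z t‖ : ℂ) ≠ 0 := by simpa using hzt
  set E := exp ((log (w s)).im * I)
  simp only [w, norm_div, ofReal_div] at hw
  field_simp at hw
  simp only [ψ, ofReal_add, add_mul, Complex.exp_add]
  refine mul_left_cancel₀ (mul_ne_zero hzs hzt') ?_
  linear_combination -hw + ‖z s‖ * E * hpolar.self_of_nhds - ‖z t‖ * hs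

open Complex in
theorem hasDerivAt_polar_angle {u v ρ θ : ℝ → ℝ} {u' v' t : ℝ}
    (hu : HasDerivAt u u' t) (hv : HasDerivAt v v' t) (hθ : ContinuousAt θ t)
    (hρ : ∀ᶠ s in 𝓝 t, 0 < ρ s)
    (hpolar : ∀ᶠ s in 𝓝 t, (u s, v s) = (ρ s * Real.cos (θ s), ρ s * Real.sin (θ s))) :
    HasDerivAt θ ((u t * v' - v t * u') / (u t ^ 2 + v t ^ 2)) t := by
  set z : ℝ → ℂ := fun s => u s + v s * I
  have hz : HasDerivAt z (u' + v' * I) t := hu.ofReal_comp.add (hv.ofReal_comp.mul_const I)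
  have hz_polar : ∀ᶠ s in 𝓝 t, z s = ρ s * exp (θ s * I) ∧ ‖z s‖ = ρ s := by
    filter_upwards [hρ, hpolar] with s hρs hs
    obtain ⟨hus, hvs⟩ := Prod.mk.inj hs
    have hzs : z s = ρ s * exp (θ s * I) := by
      simp only [z, hus, hvs, exp_mul_I]
      push_cast
      ring
    refine ⟨hzs, ?_⟩
    rw [hzs, norm_mul, norm_exp_ofReal_mul_I, norm_real, Real.norm_of_nonneg hρs.le, mul_one]
  have hzt : z t ≠ 0 := by
    rw [hz_polar.self_of_nhds.1]
    exact mul_ne_zero (ofReal_ne_zero.2 hρ.self_of_nhds.ne') (exp_ne_zero _)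
  convert hasDerivAt_of_eq_norm_mul_exp_mul_I hz hzt hθ
    (hz_polar.mono fun s hs => hs.2 ▸ hs.1) using 1
  simp only [z, div_im, normSq_apply, add_re, add_im, mul_re, mul_im, ofReal_re, ofReal_im,
    I_re, I_im]
  ring

noncomputable def radialFactor (a t : ℝ) : ℝ := 1 + a ^ 2 * sin t ^ 2 + a * sin (2 * t)

noncomputable def angularFactor (a b t : ℝ) : ℝ := 1 + (a ^ 2 - b) * sin t ^ 2

theorem sq_add_sq_eq_mul_radialFactor (P P₁ t : ℝ) (hP : P ≠ 0) :
    (P * sin t) ^ 2 + (P₁ * sin t + P * cos t) ^ 2 = P ^ 2 * radialFactor (P₁ / P) t := by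
  rw [radialFactor, sin_two_mul]
  field_simp
  linear_combination P ^ 2 * sin_sq_add_cos_sq t

theorem sq_sub_mul_eq_mul_angularFactor (P P₁ P₂ t : ℝ) (hP : P ≠ 0) :
    (P₁ * sin t + P * cos t) ^ 2 - P * sin t * (P₂ * sin t + 2 * P₁ * cos t - P * sin t) =
      P ^ 2 * angularFactor (P₁ / P) (P₂ / P) t := by
  rw [angularFactor]
  field_simp
  linear_combination P ^ 2 * sin_sq_add_cos_sq t

theorem hasDerivAt_angle_of_mul_sin {p φ ρ : ℝ → ℝ} {t : ℝ} (hp : ContDiffAt ℝ 2 p t)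
    (hpt : p t ≠ 0) (hφ : ContinuousAt φ t) (hρ : ∀ᶠ s in 𝓝 t, 0 < ρ s)
    (hpolar : ∀ᶠ s in 𝓝 t, (p s * sin s, -(deriv p s * sin s + p s * cos s)) =
      (ρ s * cos (φ s), ρ s * sin (φ s))) :
    HasDerivAt φ (angularFactor (deriv p t / p t) (deriv (deriv p) t / p t) t /
      radialFactor (deriv p t / p t) t) t := by
  have hp₁ : HasDerivAt p (deriv p t) t := (hp.differentiableAt (by norm_num)).hasDerivAt
  have hp₂ : HasDerivAt (deriv p) (deriv (deriv p) t) t :=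
    ((hp.derivWithin (m := 1) (by norm_num)).differentiableAt one_ne_zero).hasDerivAt
  have hu := hp₁.mul (hasDerivAt_sin t)
  have hv := ((hp₂.mul (hasDerivAt_sin t)).add (hp₁.mul (hasDerivAt_cos t))).neg
  convert hasDerivAt_polar_angle hu hv hφ hρ hpolar using 1
  rw [← mul_div_mul_left _ _ (pow_ne_zero 2 hpt), ← sq_sub_mul_eq_mul_angularFactor _ _ _ _ hpt,
    ← sq_add_sq_eq_mul_radialFactor _ _ _ hpt]
  congr 1 <;> simp only [Pi.mul_apply, Pi.neg_apply, Pi.add_apply] <;> ring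

theorem Filter.Tendsto.zero_mul_of_abs_le_one {α : Type*} {l : Filter α} {f g : α → ℝ}
    (hf : Tendsto f l (𝓝 0)) (hg : ∀ x, |g x| ≤ 1) :
    Tendsto (fun x => f x * g x) l (𝓝 0) :=
  hf.zero_mul_isBoundedUnder_le (isBoundedUnder_of ⟨1, fun x => by simpa using hg x⟩)

theorem tendsto_radialFactor {l : Filter ℝ} {a : ℝ → ℝ} (ha : Tendsto a l (𝓝 0)) :
    Tendsto (fun t => radialFactor (a t) t) l (𝓝 1) := by
  have hsq : Tendsto (fun t => a t ^ 2 * sin t ^ 2) l (𝓝 0) :=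
    (by simpa using ha.pow 2 : Tendsto (fun t => a t ^ 2) l (𝓝 0)).zero_mul_of_abs_le_one
      fun t => by rw [abs_of_nonneg (sq_nonneg _)]; exact sin_sq_le_one t
  have hlin : Tendsto (fun t => a t * sin (2 * t)) l (𝓝 0) :=
    ha.zero_mul_of_abs_le_one fun t => abs_sin_le_one _
  simpa [radialFactor, add_assoc] using (hsq.add hlin).const_add 1

theorem tendsto_angularFactor {l : Filter ℝ} {a b : ℝ → ℝ} (ha : Tendsto a l (𝓝 0))
    (hb : Tendsto b l (𝓝 0)) : Tendsto (fun t => angularFactor (a t) (b t) t) l (𝓝 1) := by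
  have hab : Tendsto (fun t => a t ^ 2 - b t) l (𝓝 0) := by simpa using (ha.pow 2).sub hb
  simpa [angularFactor] using (hab.zero_mul_of_abs_le_one fun t => by
    rw [abs_of_nonneg (sq_nonneg _)]; exact sin_sq_le_one t).const_add 1

theorem angle_derivative_tendsto_one_general
    (t₀ : ℝ)
    (p : ℝ → ℝ)
    (hp_pos : ∀ t ≥ t₀, 0 < p t)
    (hp_smooth : ContDiffOn ℝ 2 p (Set.Ici t₀))
    (hp1 : Filter.Tendsto (fun t => deriv p t / p t) Filter.atTop (nhds 0))
    (hp2 : Filter.Tendsto (fun t => deriv (deriv p) t / p t) Filter.atTop (nhds 0))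
    (x x' r : ℝ → ℝ)
    (hx : ∀ t, x t = p t * Real.sin t)
    (hx' : ∀ t, x' t = deriv p t * Real.sin t + p t * Real.cos t)
    (hr : ∀ t, r t = Real.sqrt (x t ^ 2 + x' t ^ 2))
    (hr_pos : ∀ t ≥ t₀, 0 < r t)
    (φ : ℝ → ℝ)
    (hφ_cont : ContinuousOn φ (Set.Ici t₀))
    (hφ : ∀ t ≥ t₀, (x t, -x' t) = (r t * Real.cos (φ t), r t * Real.sin (φ t))) :
    (∀ᶠ t in Filter.atTop, DifferentiableAt ℝ φ t) ∧
    Filter.Tendsto (fun t => deriv φ t) Filter.atTop (nhds 1) ∧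
    Filter.Tendsto (fun t => r t / p t) Filter.atTop (nhds 1) := by
  have hev : ∀ᶠ t in atTop, t₀ < t := eventually_gt_atTop t₀
  have hφ' : ∀ t > t₀, HasDerivAt φ (angularFactor (deriv p t / p t) (deriv (deriv p) t / p t) t /
      radialFactor (deriv p t / p t) t) t := by
    intro t ht
    have hIci : Ici t₀ ∈ 𝓝 t := Ici_mem_nhds ht
    refine hasDerivAt_angle_of_mul_sin (hp_smooth.contDiffAt hIci) (hp_pos t ht.le).ne'
      (hφ_cont.continuousAt hIci) (ρ := r) ?_ ?_
    · filter_upwards [hIci] with s hs using hr_pos s hs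
    · filter_upwards [hIci] with s hs
      rw [← hx, ← hx']
      exact hφ s hs
  refine ⟨hev.mono fun t ht => (hφ' t ht).differentiableAt, ?_, ?_⟩
  · have hlim := (tendsto_angularFactor hp1 hp2).div (tendsto_radialFactor hp1) one_ne_zero
    rw [div_one] at hlim
    refine hlim.congr' ?_
    filter_upwards [hev] with t ht using ((hφ' t ht).deriv).symm
  · have hlim := (tendsto_radialFactor hp1).sqrt
    rw [sqrt_one] at hlim
    refine hlim.congr' ?_
    filter_upwards [hev] with t ht
    have hpt := hp_pos t ht.le
    rw [hr, hx, hx', sq_add_sq_eq_mul_radialFactor _ _ _ hpt.ne', sqrt_mul (sq_nonneg _),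
      sqrt_sq hpt.le, mul_div_cancel_left₀ _ hpt.ne']

/-- the angle function `φ` of the phase curve `(x, -x′)` of
`x(t) = p(t) sin t` satisfies `φ′(t) → 1`, and the polar radius satisfies
`r(t)/p(t) → 1`, as `t → ∞`. -/
theorem angle_derivative_tendsto_one
    (t₀ : ℝ) (ht₀ : 0 < t₀)
    (p : ℝ → ℝ)
    (hp_pos : ∀ t ≥ t₀, 0 < p t)
    (hp_smooth : ContDiffOn ℝ 2 p (Set.Ici t₀))
    (hp1 : Filter.Tendsto (fun t => deriv p t / p t) Filter.atTop (nhds 0))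
    (hp2 : Filter.Tendsto (fun t => deriv (deriv p) t / p t) Filter.atTop (nhds 0))
    (x x' r : ℝ → ℝ)
    (hx : ∀ t, x t = p t * Real.sin t)
    (hx' : ∀ t, x' t = deriv p t * Real.sin t + p t * Real.cos t)
    (hr : ∀ t, r t = Real.sqrt (x t ^ 2 + x' t ^ 2))
    (hr_pos : ∀ t ≥ t₀, 0 < r t)
    (φ : ℝ → ℝ)
    (hφ_cont : ContinuousOn φ (Set.Ici t₀))
    (hφ : ∀ t ≥ t₀, (x t, -x' t) = (r t * Real.cos (φ t), r t * Real.sin (φ t))) :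
    (∀ᶠ t in Filter.atTop, DifferentiableAt ℝ φ t) ∧
    Filter.Tendsto (fun t => deriv φ t) Filter.atTop (nhds 1) ∧
    Filter.Tendsto (fun t => r t / p t) Filter.atTop (nhds 1) :=
  angle_derivative_tendsto_one_general t₀ p hp_pos hp_smooth hp1 hp2 x x' r hx hx' hr hr_pos φ
    hφ_cont hφ
end

section
/- Let α ∈ (0,1), t₀ > 0, and let p : [t₀,∞) → (0,∞) be a C¹ function with p(t)·t^{α} → 1 and p′(t)/(−α t^{−α−1}) → 1 as t → ∞, and such that 1 + (p′(t)/p(t))²·sin²t + (p′(t)/p(t))·sin 2t > 0 for all t ≥ t₀. Define r(t) = p(t)·√(1 + (p′(t)/p(t))²·sin²t + (p′(t)/p(t))·sin 2t) for t ∈ [t₀,∞). Let C ∈ ℝ, φ₁ > 0, and let t(·) : [φ₁,∞) → [t₀,∞) be a function for which there exists K > 0 with |t(φ) − φ − C| ≤ K/φ for all φ ≥ φ₁. Then for every Δφ > 1 there exist a constant k > 0 and φ₂ ≥ φ₁ such that for all φ ≥ φ₂: r(t(φ)) − r(t(φ + Δφ)) ≥ k·φ^{−α−1}. -/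
/-! Since `p′/p = O(1/t)`, the radicand is `1 + u` with `u = O(1/t)`, and
`√(1 + u) = 1 + u/2 + O(u²)` gives `|r(t) − p(t)| ≤ (α/2 + o(1)) t^{−α−1}`, the constant `α/2`
coming from `t · |p′/p| → α`. The arguments `t(φ)` and `t(φ + Δφ)` are `φ + O(1)` and differ by
`Δφ + o(1)`, so the mean value theorem gives
`p(t(φ)) − p(t(φ + Δφ)) ≥ (α − o(1)) Δφ φ^{−α−1}`. The two radius defects cost at most
`(α + o(1)) φ^{−α−1}`, and `Δφ > 1` leaves a positive margin. -/

open Set Filter Real Topology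

lemma abs_sqrt_one_add_sub_one_le {u : ℝ} (hu : 0 ≤ 1 + u) :
    |√(1 + u) - 1| ≤ |u| / 2 + u ^ 2 / 2 := by
  set s := √(1 + u)
  have hs : s ^ 2 = 1 + u := sq_sqrt hu
  -- `s - 1 = u / 2 - (s - 1) ^ 2 / 2`, and `|s - 1| ≤ |s - 1| (s + 1) = |u|`
  have hsq : (s - 1) ^ 2 ≤ u ^ 2 := by
    have : u ^ 2 = (s - 1) ^ 2 * (s + 1) ^ 2 := by rw [← mul_pow]; nlinarith
    rw [this]
    exact le_mul_of_one_le_right (sq_nonneg _) (by nlinarith [sqrt_nonneg (1 + u)])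
  rw [abs_le]
  constructor <;> nlinarith [le_abs_self u, neg_abs_le u, sq_nonneg (s - 1)]

lemma abs_sq_mul_sin_sq_add_mul_sin_le (q t : ℝ) :
    |q ^ 2 * sin t ^ 2 + q * sin (2 * t)| ≤ |q| * (1 + |q|) := by
  calc |q ^ 2 * sin t ^ 2 + q * sin (2 * t)|
      ≤ |q| ^ 2 * |sin t| ^ 2 + |q| * |sin (2 * t)| :=
        (abs_add_le _ _).trans_eq (by rw [abs_mul, abs_mul, abs_pow, abs_pow])
    _ ≤ |q| ^ 2 * 1 ^ 2 + |q| * 1 := by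
        gcongr
        exacts [abs_sin_le_one t, abs_sin_le_one _]
    _ = |q| * (1 + |q|) := by ring

noncomputable def sqrtDefect (q : ℝ) : ℝ := |q| * (1 + |q|) / 2 + (|q| * (1 + |q|)) ^ 2 / 2

lemma abs_mul_sqrt_sub_le {P q t : ℝ} (hP : 0 ≤ P)
    (h : 0 ≤ 1 + q ^ 2 * sin t ^ 2 + q * sin (2 * t)) :
    |P * √(1 + q ^ 2 * sin t ^ 2 + q * sin (2 * t)) - P| ≤ P * sqrtDefect q := by
  rw [add_assoc] at h ⊢
  have hu := abs_sq_mul_sin_sq_add_mul_sin_le q t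
  rw [← mul_sub_one, abs_mul, abs_of_nonneg hP, sqrtDefect]
  gcongr
  refine (abs_sqrt_one_add_sub_one_le h).trans ?_
  rw [← sq_abs (q ^ 2 * _ + _)]
  gcongr

lemma tendsto_atTop_of_tendsto_sub {τ : ℝ → ℝ} {c : ℝ}
    (hτ : Tendsto (fun φ => τ φ - φ) atTop (𝓝 c)) : Tendsto τ atTop atTop :=
  (hτ.add_atTop tendsto_id).congr fun φ => sub_add_cancel (τ φ) φ

lemma tendsto_sub_of_abs_sub_le {τ : ℝ → ℝ} {C K φ₁ : ℝ}
    (h : ∀ φ ≥ φ₁, |τ φ - φ - C| ≤ K / φ) : Tendsto (fun φ => τ φ - φ) atTop (𝓝 C) := by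
  have h0 : Tendsto (fun φ => τ φ - φ - C) atTop (𝓝 0) :=
    squeeze_zero_norm' (eventually_atTop.2 ⟨φ₁, h⟩) (tendsto_const_nhds.div_atTop tendsto_id)
  simpa using h0.add_const C

lemma tendsto_comp_add_sub_of_tendsto_sub {τ : ℝ → ℝ} {c : ℝ}
    (hτ : Tendsto (fun φ => τ φ - φ) atTop (𝓝 c)) (Δ : ℝ) :
    Tendsto (fun φ => τ (φ + Δ) - φ) atTop (𝓝 (c + Δ)) :=
  ((hτ.comp (tendsto_atTop_add_const_right _ Δ tendsto_id)).add_const Δ).congr fun φ => by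
    simp only [Function.comp_apply, id]; ring

lemma Filter.Tendsto.comp_div_rpow_of_tendsto_sub {f τ : ℝ → ℝ} {β c L : ℝ}
    (hf : Tendsto (fun t => f t / t ^ β) atTop (𝓝 L))
    (hτ : Tendsto (fun φ => τ φ - φ) atTop (𝓝 c)) :
    Tendsto (fun φ => f (τ φ) / φ ^ β) atTop (𝓝 L) := by
  have hτ_top := tendsto_atTop_of_tendsto_sub hτ
  have hratio : Tendsto (fun φ => τ φ / φ) atTop (𝓝 1) := by
    refine (by simpa using (hτ.div_atTop tendsto_id).const_add 1 :
      Tendsto (fun φ => 1 + (τ φ - φ) / φ) atTop (𝓝 1)).congr' ?_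
    filter_upwards [eventually_ne_atTop 0] with φ hφ
    field_simp
    ring
  have := (hf.comp hτ_top).mul (hratio.rpow_const (p := β) (Or.inl one_ne_zero))
  rw [one_rpow, mul_one] at this
  refine this.congr' ?_
  filter_upwards [eventually_gt_atTop 0, hτ_top.eventually_gt_atTop 0] with φ hφ hτφ
  rw [Function.comp_apply, div_rpow hτφ.le hφ.le]
  field_simp [(rpow_pos_of_pos hτφ β).ne']

lemma tendsto_mul_rpow_mul_sub_sub_div_rpow {f τ₁ τ₂ : ℝ → ℝ} {β a c Δ L : ℝ}
    (hf : Tendsto (fun t => f t / t ^ β) atTop (𝓝 L))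
    (hτ₁ : Tendsto (fun φ => τ₁ φ - φ) atTop (𝓝 c))
    (hτ₂ : Tendsto (fun φ => τ₂ φ - φ) atTop (𝓝 (c + Δ))) :
    Tendsto (fun φ => (a * τ₂ φ ^ β * (τ₂ φ - τ₁ φ) - f (τ₁ φ) - f (τ₂ φ)) / φ ^ β) atTop
      (𝓝 (a * Δ - L - L)) := by
  have hrpow : Tendsto (fun t : ℝ => t ^ β / t ^ β) atTop (𝓝 1) :=
    tendsto_const_nhds.congr' <| by
      filter_upwards [eventually_gt_atTop 0] with t ht
      exact (div_self (rpow_pos_of_pos ht _).ne').symm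
  have hgap : Tendsto (fun φ => τ₂ φ - τ₁ φ) atTop (𝓝 Δ) := by
    simpa using hτ₂.sub hτ₁
  have := ((((hrpow.comp_div_rpow_of_tendsto_sub hτ₂).const_mul a).mul hgap).sub
    (hf.comp_div_rpow_of_tendsto_sub hτ₁)).sub (hf.comp_div_rpow_of_tendsto_sub hτ₂)
  convert this using 1
  · ext φ; ring
  · congr 1; ring

lemma rpow_neg_sub_one_mul_rpow_mul_self {t : ℝ} (ht : 0 < t) (α : ℝ) :
    t ^ (-α - 1) * (t ^ α * t) = 1 := by
  rw [← rpow_add_one ht.ne', ← rpow_add ht]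
  norm_num

section

variable {α : ℝ} {p : ℝ → ℝ}

lemma tendsto_mul_deriv_div (hα : α ≠ 0)
    (hp0 : Tendsto (fun t => p t * t ^ α) atTop (𝓝 1))
    (hp1 : Tendsto (fun t => deriv p t / (-α * t ^ (-α - 1))) atTop (𝓝 1)) :
    Tendsto (fun t => t * (deriv p t / p t)) atTop (𝓝 (-α)) := by
  have := (hp1.mul_const (-α)).div hp0 one_ne_zero
  rw [one_mul, div_one] at this
  refine this.congr' ?_
  filter_upwards [eventually_gt_atTop 0] with t ht
  have : t ^ α ≠ 0 := (rpow_pos_of_pos ht α).ne'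
  simp only [Pi.div_apply, eq_inv_of_mul_eq_one_left (rpow_neg_sub_one_mul_rpow_mul_self ht α)]
  field_simp

lemma tendsto_mul_sqrtDefect_div_rpow (hα : 0 < α)
    (hp0 : Tendsto (fun t => p t * t ^ α) atTop (𝓝 1))
    (hp1 : Tendsto (fun t => deriv p t / (-α * t ^ (-α - 1))) atTop (𝓝 1)) :
    Tendsto (fun t => p t * sqrtDefect (deriv p t / p t) / t ^ (-α - 1)) atTop (𝓝 (α / 2)) := by
  set q := fun t => deriv p t / p t
  have htq : Tendsto (fun t => t * q t) atTop (𝓝 (-α)) := tendsto_mul_deriv_div hα.ne' hp0 hp1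
  have hq : Tendsto q atTop (𝓝 0) := by
    refine (htq.div_atTop tendsto_id).congr' ?_
    filter_upwards [eventually_ne_atTop 0] with t ht
    exact mul_div_cancel_left₀ _ ht
  have hw : Tendsto (fun t => |q t| * (1 + |q t|)) atTop (𝓝 0) := by
    simpa using hq.abs.mul (hq.abs.const_add 1)
  have htw : Tendsto (fun t => |t * q t| * (1 + |q t|)) atTop (𝓝 α) := by
    simpa [abs_of_pos hα] using htq.abs.mul (hq.abs.const_add 1)
  -- `t * sqrtDefect (q t) = (t * w) * (1 + w) / 2` with `w = |q t| * (1 + |q t|)`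
  have := hp0.mul ((htw.mul (hw.const_add 1)).div_const 2)
  rw [add_zero, mul_one, one_mul] at this
  refine this.congr' ?_
  filter_upwards [eventually_gt_atTop 0] with t ht
  have : t ^ α ≠ 0 := (rpow_pos_of_pos ht α).ne'
  rw [eq_inv_of_mul_eq_one_left (rpow_neg_sub_one_mul_rpow_mul_self ht α), sqrtDefect, abs_mul,
    abs_of_pos ht]
  field_simp
  ring

lemma exists_mul_rpow_mul_sub_le_sub {a t₀ : ℝ} (hα : 0 < α) (ha : 0 ≤ a) (haα : a < α)
    (hp : ContDiffOn ℝ 1 p (Ici t₀))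
    (hp1 : Tendsto (fun t => deriv p t / (-α * t ^ (-α - 1))) atTop (𝓝 1)) :
    ∃ S, ∀ t₁ t₂, S ≤ t₁ → t₁ ≤ t₂ → a * t₂ ^ (-α - 1) * (t₂ - t₁) ≤ p t₁ - p t₂ := by
  have hderiv : ∀ᶠ s in atTop, a * s ^ (-α - 1) ≤ -deriv p s := by
    filter_upwards [hp1.eventually (eventually_ge_nhds ((div_lt_one hα).2 haα)),
      eventually_gt_atTop 0] with s hs hs0
    have hαs : 0 < α * s ^ (-α - 1) := by positivity
    rw [neg_mul, div_neg, ← neg_div, le_div_iff₀ hαs] at hs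
    calc a * s ^ (-α - 1) = a / α * (α * s ^ (-α - 1)) := by field_simp
      _ ≤ -deriv p s := hs
  obtain ⟨S, hS⟩ := eventually_atTop.1 ((hderiv.and (eventually_gt_atTop t₀)).and
    (eventually_gt_atTop 0))
  refine ⟨S, fun t₁ t₂ h₁ h₁₂ => ?_⟩
  have hdiff : DifferentiableOn ℝ p (Icc t₁ t₂) :=
    (hp.differentiableOn one_ne_zero).mono fun s hs => (hS s (h₁.trans hs.1)).1.2.le
  have := (convex_Icc t₁ t₂).image_sub_le_mul_sub_of_deriv_le hdiff.continuousOn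
    (hdiff.mono interior_subset) (C := -(a * t₂ ^ (-α - 1))) (fun s hs => ?_)
    t₁ (left_mem_Icc.2 h₁₂) t₂ (right_mem_Icc.2 h₁₂) h₁₂
  · linarith
  rw [interior_Icc] at hs
  obtain ⟨⟨hps, -⟩, hs0⟩ := hS s (h₁.trans hs.1.le)
  calc deriv p s ≤ -(a * s ^ (-α - 1)) := by linarith
    _ ≤ -(a * t₂ ^ (-α - 1)) :=
      neg_le_neg (mul_le_mul_of_nonneg_left (rpow_le_rpow_of_nonpos hs0 hs.2.le (by linarith)) ha)

lemma exists_sub_le_radius_sub_radius {a t₀ : ℝ} {r : ℝ → ℝ} (hα : 0 < α) (ha : 0 ≤ a)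
    (haα : a < α) (hp_pos : ∀ t ≥ t₀, 0 < p t) (hp : ContDiffOn ℝ 1 p (Ici t₀))
    (hp1 : Tendsto (fun t => deriv p t / (-α * t ^ (-α - 1))) atTop (𝓝 1))
    (hpos : ∀ t ≥ t₀, 0 < 1 + (deriv p t / p t) ^ 2 * sin t ^ 2 +
      (deriv p t / p t) * sin (2 * t))
    (hr : ∀ t, r t = p t * √(1 + (deriv p t / p t) ^ 2 * sin t ^ 2 +
      (deriv p t / p t) * sin (2 * t))) :
    ∃ S, ∀ t₁ t₂, S ≤ t₁ → t₁ ≤ t₂ →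
      a * t₂ ^ (-α - 1) * (t₂ - t₁) - p t₁ * sqrtDefect (deriv p t₁ / p t₁)
        - p t₂ * sqrtDefect (deriv p t₂ / p t₂) ≤ r t₁ - r t₂ := by
  obtain ⟨S, hS⟩ := exists_mul_rpow_mul_sub_le_sub hα ha haα hp hp1
  have hdefect : ∀ t ≥ t₀, |r t - p t| ≤ p t * sqrtDefect (deriv p t / p t) := fun t ht =>
    hr t ▸ abs_mul_sqrt_sub_le (hp_pos t ht).le (hpos t ht).le
  refine ⟨max S t₀, fun t₁ t₂ h₁ h₁₂ => ?_⟩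
  have h₁' := abs_le.1 (hdefect t₁ (le_of_max_le_right h₁))
  have h₂' := abs_le.1 (hdefect t₂ ((le_of_max_le_right h₁).trans h₁₂))
  linarith [hS t₁ t₂ (le_of_max_le_left h₁) h₁₂, h₁'.1, h₂'.2]

end

theorem wavy_radius_decay_general
    (α t₀ : ℝ) (hα : α ∈ Set.Ioo (0 : ℝ) 1)
    (p : ℝ → ℝ)
    (hp_pos : ∀ t ≥ t₀, 0 < p t)
    (hp_smooth : ContDiffOn ℝ 1 p (Set.Ici t₀))
    -- p(t) ∼₁ t^{-α} as t → ∞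
    (hp0 : Filter.Tendsto (fun t => p t * t ^ α) Filter.atTop (nhds 1))
    (hp1 : Filter.Tendsto (fun t => deriv p t / (-α * t ^ (-α - 1)))
      Filter.atTop (nhds 1))
    (hpos : ∀ t ≥ t₀, 0 < 1 + (deriv p t / p t) ^ 2 * Real.sin t ^ 2 +
      (deriv p t / p t) * Real.sin (2 * t))
    (r : ℝ → ℝ)
    (hr : ∀ t, r t = p t * Real.sqrt (1 + (deriv p t / p t) ^ 2 * Real.sin t ^ 2 +
      (deriv p t / p t) * Real.sin (2 * t)))
    (C φ₁ : ℝ)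
    (tf : ℝ → ℝ)
    (K : ℝ)
    (htf : ∀ φ ≥ φ₁, |tf φ - φ - C| ≤ K / φ) :
    ∀ Δφ : ℝ, 1 < Δφ → ∃ k : ℝ, 0 < k ∧ ∃ φ₂ : ℝ, φ₁ ≤ φ₂ ∧
      ∀ φ ≥ φ₂, k * φ ^ (-α - 1) ≤ r (tf φ) - r (tf (φ + Δφ)) := by
  intro Δφ hΔφ
  have hΔφ0 : 0 < Δφ := one_pos.trans hΔφ
  -- any slope `a ∈ (α / Δφ, α)` leaves a positive margin `a Δφ - α` over the two radius defects
  obtain ⟨a, hαa, haα⟩ := exists_between (div_lt_self hα.1 hΔφ)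
  have hk : 0 < a * Δφ - α := by rw [div_lt_iff₀ hΔφ0] at hαa; linarith
  obtain ⟨S, hS⟩ := exists_sub_le_radius_sub_radius hα.1 ((div_pos hα.1 hΔφ0).trans hαa).le
    haα hp_pos hp_smooth hp1 hpos hr
  have hτ₁ : Tendsto (fun φ => tf φ - φ) atTop (𝓝 C) := tendsto_sub_of_abs_sub_le htf
  have hτ₂ := tendsto_comp_add_sub_of_tendsto_sub hτ₁ Δφ
  have hG := tendsto_mul_rpow_mul_sub_sub_div_rpow (a := a)
    (tendsto_mul_sqrtDefect_div_rpow hα.1 hp0 hp1) hτ₁ hτ₂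
  refine ⟨(a * Δφ - α) / 2, half_pos hk, ?_⟩
  obtain ⟨φ₂, hφ₂⟩ := eventually_atTop.1 <|
    (hG.eventually (eventually_gt_nhds (by linarith : (a * Δφ - α) / 2 < a * Δφ - α / 2 - α / 2)))
    |>.and ((tendsto_atTop_of_tendsto_sub hτ₁).eventually_ge_atTop S)
    |>.and ((hτ₂.sub hτ₁).eventually (eventually_gt_nhds (by linarith : 0 < C + Δφ - C)))
    |>.and (eventually_gt_atTop 0)
  refine ⟨max φ₂ φ₁, le_max_right _ _, fun φ hφ => ?_⟩
  obtain ⟨⟨⟨hGφ, hS₁⟩, h₁₂⟩, hφ0⟩ := hφ₂ φ (le_of_max_le_left hφ)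
  exact ((lt_div_iff₀ (rpow_pos_of_pos hφ0 _)).1 hGφ).le.trans (hS _ _ hS₁ (by linarith))

/-- Lemma `tehnicka2`. For the polar radius
`r(t) = p(t)√(1 + (p′/p)² sin²t + (p′/p) sin 2t)` with `p(t) ∼₁ t^{-α}`, `α ∈ (0,1)`,
and `t(φ) = φ + C + O(φ^{-1})`, for each `Δφ > 1` there is `k > 0` such that
`r(t(φ)) − r(t(φ + Δφ)) ≥ k φ^{-α-1}` for all sufficiently large `φ`. -/
theorem wavy_radius_decay
    (α t₀ : ℝ) (hα : α ∈ Set.Ioo (0 : ℝ) 1) (ht₀ : 0 < t₀)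
    (p : ℝ → ℝ)
    (hp_pos : ∀ t ≥ t₀, 0 < p t)
    (hp_smooth : ContDiffOn ℝ 1 p (Set.Ici t₀))
    -- p(t) ∼₁ t^{-α} as t → ∞
    (hp0 : Filter.Tendsto (fun t => p t * t ^ α) Filter.atTop (nhds 1))
    (hp1 : Filter.Tendsto (fun t => deriv p t / (-α * t ^ (-α - 1)))
      Filter.atTop (nhds 1))
    (hpos : ∀ t ≥ t₀, 0 < 1 + (deriv p t / p t) ^ 2 * Real.sin t ^ 2 +
      (deriv p t / p t) * Real.sin (2 * t))
    (r : ℝ → ℝ)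
    (hr : ∀ t, r t = p t * Real.sqrt (1 + (deriv p t / p t) ^ 2 * Real.sin t ^ 2 +
      (deriv p t / p t) * Real.sin (2 * t)))
    (C φ₁ : ℝ) (hφ₁ : 0 < φ₁)
    (tf : ℝ → ℝ)
    (htf_mem : ∀ φ ≥ φ₁, t₀ ≤ tf φ)
    (K : ℝ) (hK : 0 < K)
    (htf : ∀ φ ≥ φ₁, |tf φ - φ - C| ≤ K / φ) :
    ∀ Δφ : ℝ, 1 < Δφ → ∃ k : ℝ, 0 < k ∧ ∃ φ₂ : ℝ, φ₁ ≤ φ₂ ∧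
      ∀ φ ≥ φ₂, k * φ ^ (-α - 1) ≤ r (tf φ) - r (tf (φ + Δφ)) :=
  wavy_radius_decay_general α t₀ hα p hp_pos hp_smooth hp0 hp1 hpos r hr C φ₁ tf K htf
end

section
/- Let β > 0, δ₀ > 0, and let q : (0,δ₀] → ℝ be a C¹ function for which there exist constants 0 < C₁ ≤ C₂ with C₁x^{−β} ≤ q(x) ≤ C₂x^{−β} and C₁x^{−β−1} ≤ −q′(x) ≤ C₂x^{−β−1} for all x ∈ (0,δ₀]. Then q is strictly decreasing on (0,δ₀], it has an inverse function q^{−1} : [m₀,∞) → (0,δ₀] where m₀ = q(δ₀), and there exist constants 0 < D₁ ≤ D₂ such that: D₁t^{−1/β} ≤ q^{−1}(t) ≤ D₂t^{−1/β} and D₁t^{−1/β−1} ≤ −(q^{−1})′(t) ≤ D₂t^{−1/β−1} for all t ≥ m₀; and for all s, t with m₀ ≤ s < t: D₁·t^{−1/β−1}·(t − s) ≤ q^{−1}(s) − q^{−1}(t) ≤ D₂·s^{−1/β−1}·(t − s). -/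
/-!
Since `-q′ ≥ C₁ δ₀^(-β-1) > 0`, the function `q` is strictly decreasing and expanding, so its
inverse is Lipschitz, and `q x ≥ C₁ x^(-β) → ∞` as `x → 0⁺` makes `q` map `(0, δ₀]` onto
`[q δ₀, ∞)`. The inverse function rule gives `-(q⁻¹)′ t = 1 / (-q′ x)` with `x = q⁻¹ t`.
Reading `t ≍ x^(-β)` backwards gives `x ≍ t^(-1/β)`, and then
`1 / (-q′ x) ≍ x^(β+1) = x · x^β ≍ t^(-1/β) · t⁻¹`. The difference estimate is the mean value
theorem for `q⁻¹`, the bound `t^(-1/β-1)` being decreasing in `t`.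
-/

open Set Filter Real Topology Function

namespace Real

variable {β C t x : ℝ}

theorem mul_rpow_neg_le_iff_div_le_rpow (hx : 0 < x) (ht : 0 < t) :
    C * x ^ (-β) ≤ t ↔ C / t ≤ x ^ β := by
  rw [rpow_neg hx.le, ← div_eq_mul_inv, div_le_iff₀ (by positivity), div_le_iff₀' ht]

theorem le_mul_rpow_neg_iff_rpow_le_div (hx : 0 < x) (ht : 0 < t) :
    t ≤ C * x ^ (-β) ↔ x ^ β ≤ C / t := by
  rw [rpow_neg hx.le, ← div_eq_mul_inv, le_div_iff₀ (by positivity), le_div_iff₀' ht]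

theorem rpow_one_div_mul_rpow_neg_one_div (hC : 0 ≤ C) (ht : 0 < t) :
    C ^ (1 / β) * t ^ (-(1 / β)) = (C / t) ^ β⁻¹ := by
  rw [div_rpow hC ht.le, rpow_neg ht.le, one_div, div_eq_mul_inv]

theorem mul_rpow_neg_le_iff (hβ : 0 < β) (hC : 0 ≤ C) (hx : 0 < x) (ht : 0 < t) :
    C * x ^ (-β) ≤ t ↔ C ^ (1 / β) * t ^ (-(1 / β)) ≤ x := by
  rw [mul_rpow_neg_le_iff_div_le_rpow hx ht, rpow_one_div_mul_rpow_neg_one_div hC ht,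
    rpow_inv_le_iff_of_pos (by positivity) hx.le hβ]

theorem le_mul_rpow_neg_iff (hβ : 0 < β) (hC : 0 ≤ C) (hx : 0 < x) (ht : 0 < t) :
    t ≤ C * x ^ (-β) ↔ x ≤ C ^ (1 / β) * t ^ (-(1 / β)) := by
  rw [le_mul_rpow_neg_iff_rpow_le_div hx ht, rpow_one_div_mul_rpow_neg_one_div hC ht,
    le_rpow_inv_iff_of_pos hx.le (by positivity) hβ]

variable {C₁ C₂ d : ℝ}

theorem inverse_bounds_of_rpow_neg_bounds (hβ : 0 < β) (hC₁ : 0 < C₁) (hC₁₂ : C₁ ≤ C₂)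
    (hx : 0 < x) (ht : 0 < t) (hxt : C₁ * x ^ (-β) ≤ t ∧ t ≤ C₂ * x ^ (-β))
    (hd : C₁ * x ^ (-β - 1) ≤ d ∧ d ≤ C₂ * x ^ (-β - 1)) :
    C₁ / C₂ * C₁ ^ (1 / β) * t ^ (-(1 / β)) ≤ x ∧
      x ≤ C₂ / C₁ * C₂ ^ (1 / β) * t ^ (-(1 / β)) ∧
      C₁ / C₂ * C₁ ^ (1 / β) * t ^ (-(1 / β) - 1) ≤ d⁻¹ ∧
      d⁻¹ ≤ C₂ / C₁ * C₂ ^ (1 / β) * t ^ (-(1 / β) - 1) := by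
  have hC₂ : 0 < C₂ := hC₁.trans_le hC₁₂
  have hx_lo := (mul_rpow_neg_le_iff hβ hC₁.le hx ht).1 hxt.1
  have hx_hi := (le_mul_rpow_neg_iff hβ hC₂.le hx ht).1 hxt.2
  have hpow : x ^ (-β - 1) = (x * x ^ β)⁻¹ := by
    rw [← neg_add', rpow_neg hx.le, add_comm, rpow_add hx, rpow_one]
  have ht_pow : t ^ (-(1 / β) - 1) = t ^ (-(1 / β)) * t⁻¹ := by
    rw [rpow_sub_one ht.ne', div_eq_mul_inv]
  rw [hpow] at hd
  have hd₀ : 0 < d := lt_of_lt_of_le (by positivity) hd.1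
  refine ⟨?_, ?_, ?_, ?_⟩
  · refine le_trans ?_ hx_lo
    gcongr
    exact mul_le_of_le_one_left (by positivity) ((div_le_one hC₂).2 hC₁₂)
  · refine hx_hi.trans ?_
    gcongr
    exact le_mul_of_one_le_left (by positivity) ((one_le_div hC₁).2 hC₁₂)
  · calc C₁ / C₂ * C₁ ^ (1 / β) * t ^ (-(1 / β) - 1)
        = C₂⁻¹ * (C₁ ^ (1 / β) * t ^ (-(1 / β)) * (C₁ / t)) := by rw [ht_pow]; ring
      _ ≤ C₂⁻¹ * (x * x ^ β) := by
        gcongr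
        exact (mul_rpow_neg_le_iff_div_le_rpow hx ht).1 hxt.1
      _ ≤ d⁻¹ := by simpa [mul_inv_rev, mul_comm] using inv_anti₀ hd₀ hd.2
  · calc d⁻¹ ≤ C₁⁻¹ * (x * x ^ β) := by
          simpa [mul_inv_rev, mul_comm] using inv_anti₀ (by positivity) hd.1
      _ ≤ C₁⁻¹ * (C₂ ^ (1 / β) * t ^ (-(1 / β)) * (C₂ / t)) := by
        gcongr
        exact (le_mul_rpow_neg_iff_rpow_le_div hx ht).1 hxt.2
      _ = C₂ / C₁ * C₂ ^ (1 / β) * t ^ (-(1 / β) - 1) := by rw [ht_pow]; ring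

end Real

theorem HasDerivWithinAt.of_local_left_inverse {𝕜 : Type*} [NontriviallyNormedField 𝕜]
    {f g : 𝕜 → 𝕜} {f' a : 𝕜} {s t : Set 𝕜} (hg : Tendsto g (𝓝[s] a) (𝓝[t] (g a)))
    (hf : HasDerivWithinAt f f' t (g a)) (hf' : f' ≠ 0) (ha : a ∈ s)
    (hfg : ∀ᶠ y in 𝓝[s] a, f (g y) = y) : HasDerivWithinAt g f'⁻¹ s a :=
  -- `hf`, with its derivative `x ↦ x * f'` packaged as a linear equivalence since `f' ≠ 0`
  (show HasFDerivWithinAt f (ContinuousLinearEquiv.unitsEquivAut 𝕜 (Units.mk0 f' hf') :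
    𝕜 →L[𝕜] 𝕜) t (g a) from hf).of_local_left_inverse hg ha hfg

theorem AntilipschitzWith.continuousOn_of_rightInvOn {α β : Type*} [PseudoEMetricSpace α]
    [PseudoEMetricSpace β] {f : α → β} {g : β → α} {s : Set α} {t : Set β} {K : NNReal}
    (hf : AntilipschitzWith K (s.domRestrict f)) (hg : MapsTo g t s) (hfg : RightInvOn g f t) :
    ContinuousOn g t :=
  continuousOn_iff_continuous_domRestrict.2 (hf.to_rightInvOn' hg hfg).continuous

theorem ContinuousOn.surjOn_Ici_of_tendsto_atTop {f : ℝ → ℝ} {a b : ℝ} (hab : a < b)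
    (hf : ContinuousOn f (Ioc a b)) (hlim : Tendsto f (𝓝[>] a) atTop) :
    SurjOn f (Ioc a b) (Ici (f b)) := by
  intro t ht
  obtain ⟨x, hxt, hx⟩ := ((hlim.eventually_ge_atTop t).and (Ioo_mem_nhdsGT hab)).exists
  have hsub : Icc x b ⊆ Ioc a b := Icc_subset_Ioc hx.1 le_rfl
  obtain ⟨y, hy, rfl⟩ := intermediate_value_Icc' hx.2.le (hf.mono hsub) ⟨ht, hxt⟩
  exact ⟨y, hsub hy, rfl⟩

theorem tendsto_nhdsGT_zero_atTop_of_mul_rpow_neg_le {f : ℝ → ℝ} {β C δ : ℝ} (hβ : 0 < β)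
    (hC : 0 < C) (hδ : 0 < δ) (hf : ∀ x ∈ Ioc 0 δ, C * x ^ (-β) ≤ f x) :
    Tendsto f (𝓝[>] 0) atTop :=
  tendsto_atTop_mono' _ (eventually_of_mem (Ioc_mem_nhdsGT hδ) hf)
    ((tendsto_rpow_neg_nhdsGT_zero (neg_neg_of_pos hβ)).const_mul_atTop hC)

theorem strictAntiOn_of_derivWithin_neg {f : ℝ → ℝ} {D : Set ℝ} (hD : Convex ℝ D)
    (hf : ContinuousOn f D) (hf' : ∀ x ∈ interior D, derivWithin f D x < 0) :
    StrictAntiOn f D :=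
  strictAntiOn_of_deriv_neg hD hf fun x hx => by
    rw [← derivWithin_of_mem_nhds (mem_interior_iff_mem_nhds.1 hx)]
    exact hf' x hx

theorem antilipschitzWith_domRestrict_of_le_neg_derivWithin {f : ℝ → ℝ} {D : Set ℝ}
    (hD : Convex ℝ D) (hf : ContinuousOn f D) (hf' : DifferentiableOn ℝ f (interior D)) {c : ℝ}
    (hc : 0 < c) (hbound : ∀ x ∈ interior D, c ≤ -derivWithin f D x) :
    AntilipschitzWith (Real.toNNReal c⁻¹) (D.domRestrict f) := by
  have hgrowth : ∀ x ∈ D, ∀ y ∈ D, x ≤ y → c * (y - x) ≤ f x - f y := by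
    intro x hx y hy hxy
    have := hD.mul_sub_le_image_sub_of_le_deriv hf.neg hf'.neg (fun z hz => by
      rw [deriv.neg, ← derivWithin_of_mem_nhds (mem_interior_iff_mem_nhds.1 hz)]
      exact hbound z hz) x hx y hy hxy
    simp only [Pi.neg_apply] at this
    linarith
  refine AntilipschitzWith.of_le_mul_dist fun x y => ?_
  rw [Real.coe_toNNReal _ (by positivity), Subtype.dist_eq, domRestrict_apply, domRestrict_apply,
    Real.dist_eq, Real.dist_eq, ← div_eq_inv_mul, le_div_iff₀ hc, mul_comm]
  rcases le_total (x : ℝ) y with hxy | hxy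
  · rw [abs_sub_comm, abs_of_nonneg (sub_nonneg.2 hxy)]
    exact (hgrowth x x.2 y y.2 hxy).trans (le_abs_self _)
  · rw [abs_of_nonneg (sub_nonneg.2 hxy), abs_sub_comm]
    exact (hgrowth y y.2 x x.2 hxy).trans (le_abs_self _)

theorem continuousOn_invFunOn_of_le_neg_derivWithin {f : ℝ → ℝ} {D T : Set ℝ} {c : ℝ}
    (hD : Convex ℝ D) (hf : DifferentiableOn ℝ f D) (hc : 0 < c)
    (hbound : ∀ x ∈ D, c ≤ -derivWithin f D x) (hsurj : SurjOn f D T) :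
    ContinuousOn (invFunOn f D) T :=
  (antilipschitzWith_domRestrict_of_le_neg_derivWithin hD hf.continuousOn
    (hf.mono interior_subset) hc fun x hx => hbound x (interior_subset hx)
    ).continuousOn_of_rightInvOn hsurj.mapsTo_invFunOn hsurj.rightInvOn_invFunOn

theorem hasDerivWithinAt_invFunOn {𝕜 : Type*} [NontriviallyNormedField 𝕜] {f f' : 𝕜 → 𝕜}
    {s t : Set 𝕜} (hf : ∀ x ∈ s, HasDerivWithinAt f (f' x) s x) (hf' : ∀ x ∈ s, f' x ≠ 0)
    (hsurj : SurjOn f s t) (hcont : ContinuousOn (invFunOn f s) t) {y : 𝕜} (hy : y ∈ t) :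
    HasDerivWithinAt (invFunOn f s) (f' (invFunOn f s y))⁻¹ t y :=
  (hf _ (hsurj.mapsTo_invFunOn hy)).of_local_left_inverse
    ((hcont y hy).tendsto_nhdsWithin hsurj.mapsTo_invFunOn) (hf' _ (hsurj.mapsTo_invFunOn hy)) hy
    (eventually_nhdsWithin_of_forall fun _ hz => hsurj.rightInvOn_invFunOn hz)

theorem sub_bounds_of_neg_derivWithin_rpow_bounds {g : ℝ → ℝ} {m e D₁ D₂ : ℝ} (hm : 0 < m)
    (he : e ≤ 0) (hD₁ : 0 ≤ D₁) (hD₂ : 0 ≤ D₂) (hg : DifferentiableOn ℝ g (Ici m))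
    (hbound : ∀ t ≥ m, D₁ * t ^ e ≤ -derivWithin g (Ici m) t ∧
      -derivWithin g (Ici m) t ≤ D₂ * t ^ e)
    {u t : ℝ} (hu : m ≤ u) (hut : u < t) :
    D₁ * t ^ e * (t - u) ≤ g u - g t ∧ g u - g t ≤ D₂ * u ^ e * (t - u) := by
  have hsub : Icc u t ⊆ Ici m := fun x hx => hu.trans hx.1
  obtain ⟨ξ, hξ, hslope⟩ := exists_deriv_eq_slope g hut (hg.continuousOn.mono hsub)
    (hg.mono (Ioo_subset_Icc_self.trans hsub))
  have hξm : m < ξ := hu.trans_lt hξ.1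
  have hmvt : g u - g t = -derivWithin g (Ici m) ξ * (t - u) := by
    rw [derivWithin_of_mem_nhds (Ici_mem_nhds hξm), hslope]
    field_simp [(sub_pos.2 hut).ne']
    ring
  obtain ⟨hlo, hhi⟩ := hbound ξ hξm.le
  rw [hmvt]
  have htu : 0 ≤ t - u := (sub_pos.2 hut).le
  constructor
  · refine mul_le_mul_of_nonneg_right (le_trans ?_ hlo) htu
    exact mul_le_mul_of_nonneg_left (rpow_le_rpow_of_nonpos (hm.trans hξm) hξ.2.le he) hD₁
  · refine mul_le_mul_of_nonneg_right (hhi.trans ?_) htu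
    exact mul_le_mul_of_nonneg_left (rpow_le_rpow_of_nonpos (hm.trans_le hu) hξ.1.le he) hD₂

/-- Proposition `druga`. If `q ≃₁ x^{-β}` near `0` (in the sense of
two-sided bounds on `q` and `-q′`), then `q` is strictly decreasing, has an inverse
on `[m₀,∞)` with `q⁻¹(t) ≃₁ t^{-1/β}` as `t → ∞`, together with the two-sided
mean-value estimate for differences of `q⁻¹`. -/
theorem inverse_function_asymptotics
    (β δ₀ : ℝ) (hβ : 0 < β) (hδ₀ : 0 < δ₀)
    (q : ℝ → ℝ)
    (hq_smooth : ContDiffOn ℝ 1 q (Set.Ioc 0 δ₀))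
    (C₁ C₂ : ℝ) (hC₁ : 0 < C₁) (hC₁₂ : C₁ ≤ C₂)
    (hq_bound : ∀ x ∈ Set.Ioc 0 δ₀, C₁ * x ^ (-β) ≤ q x ∧ q x ≤ C₂ * x ^ (-β))
    (hq'_bound : ∀ x ∈ Set.Ioc 0 δ₀,
      C₁ * x ^ (-β - 1) ≤ -derivWithin q (Set.Ioc 0 δ₀) x ∧
      -derivWithin q (Set.Ioc 0 δ₀) x ≤ C₂ * x ^ (-β - 1)) :
    StrictAntiOn q (Set.Ioc 0 δ₀) ∧
    ∃ qi : ℝ → ℝ,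
      (∀ x ∈ Set.Ioc 0 δ₀, qi (q x) = x) ∧
      (∀ t ≥ q δ₀, qi t ∈ Set.Ioc 0 δ₀ ∧ q (qi t) = t) ∧
      ∃ D₁ D₂ : ℝ, 0 < D₁ ∧ D₁ ≤ D₂ ∧
        (∀ t ≥ q δ₀,
          D₁ * t ^ (-(1 / β)) ≤ qi t ∧ qi t ≤ D₂ * t ^ (-(1 / β)) ∧
          D₁ * t ^ (-(1 / β) - 1) ≤ -derivWithin qi (Set.Ici (q δ₀)) t ∧
          -derivWithin qi (Set.Ici (q δ₀)) t ≤ D₂ * t ^ (-(1 / β) - 1)) ∧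
        ∀ u t : ℝ, q δ₀ ≤ u → u < t →
          D₁ * t ^ (-(1 / β) - 1) * (t - u) ≤ qi u - qi t ∧
          qi u - qi t ≤ D₂ * u ^ (-(1 / β) - 1) * (t - u) := by
  set S := Ioc (0 : ℝ) δ₀
  have hC₂ : 0 < C₂ := hC₁.trans_le hC₁₂
  have hqd : DifferentiableOn ℝ q S := hq_smooth.differentiableOn one_ne_zero
  have hq'_lower : ∀ x ∈ S, C₁ * δ₀ ^ (-β - 1) ≤ -derivWithin q S x := fun x hx =>
    (mul_le_mul_of_nonneg_left (rpow_le_rpow_of_nonpos hx.1 hx.2 (by linarith)) hC₁.le).trans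
      (hq'_bound x hx).1
  have hq'_neg : ∀ x ∈ S, derivWithin q S x < 0 := fun x hx => by
    linarith [hq'_lower x hx, (by positivity : 0 < C₁ * δ₀ ^ (-β - 1))]
  have hanti : StrictAntiOn q S := strictAntiOn_of_derivWithin_neg (convex_Ioc 0 δ₀)
    hqd.continuousOn fun x hx => hq'_neg x (interior_subset hx)
  have hsurj : SurjOn q S (Ici (q δ₀)) := hqd.continuousOn.surjOn_Ici_of_tendsto_atTop hδ₀
    (tendsto_nhdsGT_zero_atTop_of_mul_rpow_neg_le hβ hC₁ hδ₀ fun x hx => (hq_bound x hx).1)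
  set qi := invFunOn q S
  have hqi' : ∀ t ∈ Ici (q δ₀),
      HasDerivWithinAt qi (derivWithin q S (qi t))⁻¹ (Ici (q δ₀)) t :=
    fun t => hasDerivWithinAt_invFunOn (fun x hx => (hqd x hx).hasDerivWithinAt)
      (fun x hx => (hq'_neg x hx).ne) hsurj <|
      continuousOn_invFunOn_of_le_neg_derivWithin (convex_Ioc 0 δ₀) hqd (by positivity)
        hq'_lower hsurj
  have hm₀ : 0 < q δ₀ := lt_of_lt_of_le (by positivity) (hq_bound δ₀ ⟨hδ₀, le_rfl⟩).1
  have hpointwise : ∀ t ≥ q δ₀,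
      C₁ / C₂ * C₁ ^ (1 / β) * t ^ (-(1 / β)) ≤ qi t ∧
      qi t ≤ C₂ / C₁ * C₂ ^ (1 / β) * t ^ (-(1 / β)) ∧
      C₁ / C₂ * C₁ ^ (1 / β) * t ^ (-(1 / β) - 1) ≤ -derivWithin qi (Ici (q δ₀)) t ∧
      -derivWithin qi (Ici (q δ₀)) t ≤ C₂ / C₁ * C₂ ^ (1 / β) * t ^ (-(1 / β) - 1) := by
    intro t ht
    have hx : qi t ∈ S := hsurj.mapsTo_invFunOn ht
    have hxt := hsurj.rightInvOn_invFunOn (mem_Ici.2 ht) ▸ hq_bound _ hx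
    rw [(hqi' t ht).derivWithin (uniqueDiffOn_Ici _ t ht), ← inv_neg]
    exact Real.inverse_bounds_of_rpow_neg_bounds hβ hC₁ hC₁₂ hx.1 (hm₀.trans_le ht) hxt
      (hq'_bound _ hx)
  refine ⟨hanti, qi, fun x hx => hanti.injOn.leftInvOn_invFunOn hx,
    fun t ht => ⟨hsurj.mapsTo_invFunOn ht, hsurj.rightInvOn_invFunOn ht⟩, _, _,
    by positivity, ?_, hpointwise, fun u t hu hut =>
      sub_bounds_of_neg_derivWithin_rpow_bounds hm₀ (by linarith [one_div_pos.2 hβ])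
        (by positivity) (by positivity) (fun t ht => (hqi' t ht).differentiableWithinAt)
        (fun t ht => (hpointwise t ht).2.2) hu hut⟩
  exact le_of_mul_le_mul_right ((hpointwise _ le_rfl).1.trans (hpointwise _ le_rfl).2.1)
    (by positivity)
end

section
/- Let 0 < α ≤ β, T > 0, c > 0. Let S : ℝ → ℝ be a C¹, 2T-periodic function with S(0) = S(T) = 0, S(t) ≠ 0 for all t ∈ (0,T) ∪ (T,2T), and S of opposite (constant) signs on (0,T) and on (T,2T). Let p : [0,c] → ℝ be continuous and C¹ on (0,c], let q : (0,c] → ℝ be C¹, and suppose there exist δ₀ ∈ (0,c] and constants 0 < C₁ ≤ C₂ such that for all x ∈ (0,δ₀]: C₁x^{α} ≤ p(x) ≤ C₂x^{α}, C₁x^{α−1} ≤ p′(x) ≤ C₂x^{α−1}, C₁x^{−β} ≤ q(x) ≤ C₂x^{−β}, and C₁x^{−β−1} ≤ −q′(x) ≤ C₂x^{−β−1}. Define y(x) = p(x)·S(q(x)) on (0,c], let q^{−1} : [m₀,∞) → (0,δ₀] be the inverse of q restricted to (0,δ₀] with m₀ = q(δ₀), fix t₀ ∈ (0,T), and set a_k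 = q^{−1}(kT) and s_k = q^{−1}(t₀ + kT) for k with kT ≥ m₀ and t₀ + kT ≥ m₀. Then there exist k₀ ∈ ℕ and constants c₀, c₁, c₂ > 0 such that for all k ≥ k₀: a_k ∈ (0,δ₀], y(a_k) = 0, a_{k+1} < s_k < a_k, the sequence (a_k) is strictly decreasing with a_k → 0, c₁·k^{−1/β} ≤ a_k ≤ c₂·k^{−1/β}, and max_{x∈[a_{k+1},a_k]} |y(x)| ≥ c₀·(k+1)^{−α/β}. -/
open Set Filter Real

/-- Proposition `treca` (ii). For the generalized chirp
`y(x) = p(x) S(q(x))`, the zeros `a_k = q⁻¹(kT)` form a strictly decreasing sequence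
tending to `0` with `a_k ≃ k^{-1/β}`, the points `s_k = q⁻¹(t₀ + kT)` lie in
`(a_{k+1}, a_k)`, and `max_{[a_{k+1},a_k]} |y| ≥ c₀ (k+1)^{-α/β}`. -/
theorem chirp_zeros_asymptotics
    (α β T c : ℝ) (hα : 0 < α) (hαβ : α ≤ β) (hT : 0 < T) (hc : 0 < c)
    (S : ℝ → ℝ)
    (hS_smooth : ContDiff ℝ 1 S)
    (hS_per : Function.Periodic S (2 * T))
    (hS0 : S 0 = 0) (hST : S T = 0)
    (hS_ne : ∀ s ∈ Set.Ioo 0 T ∪ Set.Ioo T (2 * T), S s ≠ 0)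
    (σ : ℝ) (hσ : σ = 1 ∨ σ = -1)
    (hS_sign₁ : ∀ s ∈ Set.Ioo 0 T, 0 < σ * S s)
    (hS_sign₂ : ∀ s ∈ Set.Ioo T (2 * T), σ * S s < 0)
    (p q : ℝ → ℝ)
    (hp_cont : ContinuousOn p (Set.Icc 0 c))
    (hp_smooth : ContDiffOn ℝ 1 p (Set.Ioc 0 c))
    (hq_smooth : ContDiffOn ℝ 1 q (Set.Ioc 0 c))
    (δ₀ C₁ C₂ : ℝ) (hδ₀ : δ₀ ∈ Set.Ioc 0 c) (hC₁ : 0 < C₁) (hC₁₂ : C₁ ≤ C₂)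
    (hp_bound : ∀ x ∈ Set.Ioc 0 δ₀, C₁ * x ^ α ≤ p x ∧ p x ≤ C₂ * x ^ α)
    (hp'_bound : ∀ x ∈ Set.Ioc 0 δ₀,
      C₁ * x ^ (α - 1) ≤ derivWithin p (Set.Ioc 0 c) x ∧
      derivWithin p (Set.Ioc 0 c) x ≤ C₂ * x ^ (α - 1))
    (hq_bound : ∀ x ∈ Set.Ioc 0 δ₀, C₁ * x ^ (-β) ≤ q x ∧ q x ≤ C₂ * x ^ (-β))
    (hq'_bound : ∀ x ∈ Set.Ioc 0 δ₀,
      C₁ * x ^ (-β - 1) ≤ -derivWithin q (Set.Ioc 0 c) x ∧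
      -derivWithin q (Set.Ioc 0 c) x ≤ C₂ * x ^ (-β - 1))
    (y : ℝ → ℝ) (hy : ∀ x, y x = p x * S (q x))
    -- the inverse of q restricted to (0, δ₀], with m₀ = q(δ₀)
    (qi : ℝ → ℝ)
    (hqi_left : ∀ x ∈ Set.Ioc 0 δ₀, qi (q x) = x)
    (hqi_right : ∀ t ≥ q δ₀, qi t ∈ Set.Ioc 0 δ₀ ∧ q (qi t) = t)
    (t₀ : ℝ) (ht₀ : t₀ ∈ Set.Ioo 0 T)
    (a sq : ℕ → ℝ)
    (ha : ∀ k : ℕ, a k = qi ((k : ℝ) * T))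
    (hsq : ∀ k : ℕ, sq k = qi (t₀ + (k : ℝ) * T)) :
    ∃ k₀ : ℕ, ∃ c₀ c₁ c₂ : ℝ, 0 < c₀ ∧ 0 < c₁ ∧ 0 < c₂ ∧
      Filter.Tendsto a Filter.atTop (nhds 0) ∧
      ∀ k ≥ k₀,
        q δ₀ ≤ (k : ℝ) * T ∧
        a k ∈ Set.Ioc 0 δ₀ ∧
        y (a k) = 0 ∧
        a (k + 1) < sq k ∧ sq k < a k ∧
        a (k + 1) < a k ∧
        c₁ * (k : ℝ) ^ (-(1 / β)) ≤ a k ∧ a k ≤ c₂ * (k : ℝ) ^ (-(1 / β)) ∧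
        c₀ * ((k : ℝ) + 1) ^ (-(α / β)) ≤
          sSup ((fun x => |y x|) '' Set.Icc (a (k + 1)) (a k)) := by
  classical
  have hβ : 0 < β := lt_of_lt_of_le hα hαβ
  have hβ' : β ≠ 0 := ne_of_gt hβ
  -- periodicity: S (x + k T) equals S x or S (x + T)
  have hper : ∀ (x : ℝ) (k : ℕ),
      S (x + (k : ℝ) * T) = S x ∨ S (x + (k : ℝ) * T) = S (x + T) := by
    intro x k
    induction k using Nat.twoStepInduction with
    | zero => left; norm_num
    | one => right; norm_num
    | more n ih _ =>
      have h2 : x + ((n + 2 : ℕ) : ℝ) * T = (x + (n : ℝ) * T) + 2 * T := by push_cast; ring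
      rw [h2, hS_per (x + (n : ℝ) * T)]
      exact ih
  have hSkT : ∀ k : ℕ, S ((k : ℝ) * T) = 0 := by
    intro k
    rcases hper 0 k with h | h <;> rw [zero_add] at h <;> rw [h]
    · exact hS0
    · rw [zero_add]; exact hST
  have hδ₀mem : δ₀ ∈ Set.Ioc 0 δ₀ := ⟨hδ₀.1, le_refl _⟩
  have hδpos : 0 < δ₀ := hδ₀.1
  have hm₀pos : 0 < q δ₀ :=
    lt_of_lt_of_le (by positivity) (hq_bound δ₀ hδ₀mem).1
  -- q is strictly antitone on (0, δ₀]
  have hq_anti : StrictAntiOn q (Set.Ioc 0 δ₀) := by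
    apply strictAntiOn_of_deriv_neg (convex_Ioc 0 δ₀)
      (hq_smooth.continuousOn.mono (Set.Ioc_subset_Ioc_right hδ₀.2))
    intro x hx
    rw [interior_Ioc] at hx
    have hx' : x ∈ Set.Ioc 0 δ₀ := ⟨hx.1, le_of_lt hx.2⟩
    have hmem : Set.Ioc 0 c ∈ nhds x :=
      Ioc_mem_nhds hx.1 (lt_of_lt_of_le hx.2 hδ₀.2)
    have hderiv : derivWithin q (Set.Ioc 0 c) x = deriv q x :=
      derivWithin_of_mem_nhds hmem
    have hxpos : 0 < x := hx.1
    have h1 := (hq'_bound x hx').1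
    rw [hderiv] at h1
    have h2 : (0 : ℝ) < C₁ * x ^ (-β - 1) := by positivity
    linarith
  -- qi is strictly antitone on [q δ₀, ∞)
  have hqi_anti : ∀ t t', q δ₀ ≤ t → t < t' → qi t' < qi t := by
    intro t t' ht htt'
    obtain ⟨h1, h2⟩ := hqi_right t ht
    obtain ⟨h1', h2'⟩ := hqi_right t' (le_of_lt (lt_of_le_of_lt ht htt'))
    by_contra h
    push_neg at h
    rcases eq_or_lt_of_le h with h | h
    · rw [h, h2'] at h2; exact absurd h2.symm (ne_of_lt htt')
    · have := hq_anti h1 h1' h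
      rw [h2, h2'] at this
      exact absurd htt' (not_lt.mpr (le_of_lt this))
  set K : ℕ := ⌈q δ₀ / T⌉₊ + 1 with hK
  have hk₀T : ∀ k : ℕ, K ≤ k → q δ₀ ≤ (k : ℝ) * T := by
    intro k hk
    have h1 : q δ₀ / T ≤ (⌈q δ₀ / T⌉₊ : ℝ) := Nat.le_ceil _
    have h2 : ((⌈q δ₀ / T⌉₊ : ℕ) : ℝ) ≤ (k : ℝ) := by
      exact_mod_cast le_trans (Nat.le_succ _) hk
    calc q δ₀ = (q δ₀ / T) * T := by field_simp
    _ ≤ (k : ℝ) * T := mul_le_mul_of_nonneg_right (le_trans h1 h2) (le_of_lt hT)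
  have hK1 : ∀ k : ℕ, K ≤ k → (1 : ℝ) ≤ (k : ℝ) := by
    intro k hk
    have : 1 ≤ k := le_trans (Nat.le_add_left 1 _) hk
    exact_mod_cast this
  have hC₂ : 0 < C₂ := lt_of_lt_of_le hC₁ hC₁₂
  set d₁ : ℝ := (T / C₁) ^ (-(1 / β)) with hd₁
  set d₂ : ℝ := (T / C₂) ^ (-(1 / β)) with hd₂
  have hd₁pos : 0 < d₁ := Real.rpow_pos_of_pos (by positivity) _
  have hd₂pos : 0 < d₂ := Real.rpow_pos_of_pos (by positivity) _
  have hexp_nonpos : (-(1 / β)) ≤ 0 := by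
    have : (0:ℝ) ≤ 1 / β := by positivity
    linarith
  -- key per-index facts
  have key : ∀ k : ℕ, K ≤ k → a k ∈ Set.Ioc 0 δ₀ ∧ q (a k) = (k : ℝ) * T ∧
      d₁ * (k : ℝ) ^ (-(1 / β)) ≤ a k ∧ a k ≤ d₂ * (k : ℝ) ^ (-(1 / β)) := by
    intro k hk
    have hkT := hk₀T k hk
    have hk1 := hK1 k hk
    have hkpos : (0 : ℝ) < (k : ℝ) := lt_of_lt_of_le zero_lt_one hk1
    obtain ⟨hmem, hq_ak⟩ := hqi_right ((k : ℝ) * T) hkT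
    rw [← ha k] at hmem hq_ak
    have hx : 0 < a k := hmem.1
    have hpow : 0 < (a k) ^ (-β) := Real.rpow_pos_of_pos hx _
    have hbl := (hq_bound (a k) hmem).1
    have hbu := (hq_bound (a k) hmem).2
    rw [hq_ak] at hbl hbu
    have hid : ((a k) ^ (-β)) ^ (-(1 / β)) = a k := by
      rw [← Real.rpow_mul hx.le, show (-β) * (-(1 / β)) = 1 by field_simp, Real.rpow_one]
    refine ⟨hmem, hq_ak, ?_, ?_⟩
    · have h1 : (a k) ^ (-β) ≤ (k : ℝ) * (T / C₁) := by
        rw [show (k : ℝ) * (T / C₁) = (k : ℝ) * T / C₁ by ring, le_div_iff₀ hC₁, mul_comm]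
        exact hbl
      have h2 : ((k : ℝ) * (T / C₁)) ^ (-(1 / β)) ≤ ((a k) ^ (-β)) ^ (-(1 / β)) :=
        Real.rpow_le_rpow_of_nonpos hpow h1 hexp_nonpos
      rw [hid] at h2
      calc d₁ * (k : ℝ) ^ (-(1 / β)) = ((k : ℝ) * (T / C₁)) ^ (-(1 / β)) := by
            rw [Real.mul_rpow hkpos.le (by positivity)]; ring
      _ ≤ a k := h2
    · have h1 : (k : ℝ) * (T / C₂) ≤ (a k) ^ (-β) := by
        rw [show (k : ℝ) * (T / C₂) = (k : ℝ) * T / C₂ by ring, div_le_iff₀ hC₂, mul_comm ((a k) ^ (-β))]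
        exact hbu
      have hpos' : (0 : ℝ) < (k : ℝ) * (T / C₂) := by positivity
      have h2 : ((a k) ^ (-β)) ^ (-(1 / β)) ≤ ((k : ℝ) * (T / C₂)) ^ (-(1 / β)) :=
        Real.rpow_le_rpow_of_nonpos hpos' h1 hexp_nonpos
      rw [hid] at h2
      calc a k ≤ ((k : ℝ) * (T / C₂)) ^ (-(1 / β)) := h2
      _ = d₂ * (k : ℝ) ^ (-(1 / β)) := by
            rw [Real.mul_rpow hkpos.le (by positivity)]; ring
  -- tendsto
  have htend : Tendsto a atTop (nhds 0) := by
    have h1 : Tendsto (fun k : ℕ => d₂ * (k : ℝ) ^ (-(1 / β))) atTop (nhds 0) := by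
      have h0 := (tendsto_rpow_neg_atTop (show (0:ℝ) < 1 / β by positivity)).comp
        tendsto_natCast_atTop_atTop
      simpa using h0.const_mul d₂
    apply tendsto_of_tendsto_of_tendsto_of_le_of_le' tendsto_const_nhds h1
    · filter_upwards [eventually_ge_atTop K] with k hk
      exact (key k hk).1.1.le
    · filter_upwards [eventually_ge_atTop K] with k hk
      exact (key k hk).2.2.2
  -- constants for the max bound
  have hSt₀ : 0 < |S t₀| := abs_pos.mpr (hS_ne t₀ (Or.inl ht₀))
  have hSt₁ : 0 < |S (t₀ + T)| := by
    apply abs_pos.mpr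
    apply hS_ne (t₀ + T) (Or.inr ⟨by linarith [ht₀.1], by linarith [ht₀.2]⟩)
  set m : ℝ := min |S t₀| |S (t₀ + T)| with hm
  have hmpos : 0 < m := lt_min hSt₀ hSt₁
  refine ⟨K, C₁ * d₁ ^ α * m, d₁, d₂, by positivity, hd₁pos, hd₂pos, htend, ?_⟩
  intro k hk
  have hkT := hk₀T k hk
  obtain ⟨hak_mem, hq_ak, hak_lo, hak_up⟩ := key k hk
  obtain ⟨hak1_mem, hq_ak1, hak1_lo, hak1_up⟩ := key (k + 1) (le_trans hk (Nat.le_succ k))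
  -- ordering
  have ht₀k : q δ₀ ≤ t₀ + (k : ℝ) * T := by linarith [ht₀.1]
  have hord1 : a (k + 1) < sq k := by
    rw [ha (k + 1), hsq k]
    exact hqi_anti (t₀ + (k : ℝ) * T) (((k + 1 : ℕ) : ℝ) * T) ht₀k
      (by push_cast; linarith [ht₀.2])
  have hord2 : sq k < a k := by
    rw [ha k, hsq k]
    exact hqi_anti ((k : ℝ) * T) (t₀ + (k : ℝ) * T) hkT (by linarith [ht₀.1])
  -- s_k facts
  obtain ⟨hsk_mem, hq_sk⟩ := hqi_right (t₀ + (k : ℝ) * T) ht₀k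
  rw [← hsq k] at hsk_mem hq_sk
  -- max bound
  have hsub : Set.Icc (a (k + 1)) (a k) ⊆ Set.Ioc 0 δ₀ := by
    intro x hx
    exact ⟨lt_of_lt_of_le hak1_mem.1 hx.1, le_trans hx.2 hak_mem.2⟩
  have hsub' : Set.Icc (a (k + 1)) (a k) ⊆ Set.Ioc 0 c :=
    fun x hx => ⟨(hsub hx).1, le_trans (hsub hx).2 hδ₀.2⟩
  have hycont : ContinuousOn (fun x => |y x|) (Set.Icc (a (k + 1)) (a k)) := by
    have h1 : ContinuousOn (fun x => p x * S (q x)) (Set.Icc (a (k + 1)) (a k)) := by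
      apply ContinuousOn.mul
      · exact hp_cont.mono (fun x hx => ⟨(hsub' hx).1.le, (hsub' hx).2⟩)
      · exact hS_smooth.continuous.comp_continuousOn (hq_smooth.continuousOn.mono hsub')
    exact (h1.congr fun x _ => hy x).abs
  have hbdd : BddAbove ((fun x => |y x|) '' Set.Icc (a (k + 1)) (a k)) :=
    (isCompact_Icc.image_of_continuousOn hycont).bddAbove
  have hmemI : sq k ∈ Set.Icc (a (k + 1)) (a k) := ⟨hord1.le, hord2.le⟩
  have hsup : |y (sq k)| ≤ sSup ((fun x => |y x|) '' Set.Icc (a (k + 1)) (a k)) :=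
    le_csSup hbdd ⟨sq k, hmemI, rfl⟩
  -- lower bound on |y (sq k)|
  have hSlow : m ≤ |S (t₀ + (k : ℝ) * T)| := by
    rcases hper t₀ k with h | h <;> rw [h]
    · exact min_le_left _ _
    · exact min_le_right _ _
  have hp_sk := (hp_bound (sq k) hsk_mem).1
  have hsk_pos : 0 < sq k := hsk_mem.1
  have hp_pos : 0 < p (sq k) := lt_of_lt_of_le (by positivity) hp_sk
  have hyval : |y (sq k)| = p (sq k) * |S (t₀ + (k : ℝ) * T)| := by
    rw [hy (sq k), hq_sk, abs_mul, abs_of_pos hp_pos]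
  have hchain : C₁ * d₁ ^ α * m * ((k : ℝ) + 1) ^ (-(α / β)) ≤ |y (sq k)| := by
    have hstep1 : d₁ ^ α * ((k : ℝ) + 1) ^ (-(α / β)) ≤ (sq k) ^ α := by
      have e1 : (d₁ * ((k : ℝ) + 1) ^ (-(1 / β))) ^ α =
          d₁ ^ α * ((k : ℝ) + 1) ^ (-(α / β)) := by
        rw [Real.mul_rpow hd₁pos.le (Real.rpow_nonneg (by positivity) _),
          ← Real.rpow_mul (show (0:ℝ) ≤ (k : ℝ) + 1 by positivity),
          show (-(1 / β)) * α = -(α / β) by ring]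
      have e2 : d₁ * ((k : ℝ) + 1) ^ (-(1 / β)) ≤ a (k + 1) := by
        have := hak1_lo
        push_cast at this
        exact this
      calc d₁ ^ α * ((k : ℝ) + 1) ^ (-(α / β)) = (d₁ * ((k : ℝ) + 1) ^ (-(1 / β))) ^ α := e1.symm
      _ ≤ (a (k + 1)) ^ α := Real.rpow_le_rpow (by positivity) e2 hα.le
      _ ≤ (sq k) ^ α := Real.rpow_le_rpow (by linarith [hak1_mem.1]) hord1.le hα.le
    calc C₁ * d₁ ^ α * m * ((k : ℝ) + 1) ^ (-(α / β))
        = C₁ * (d₁ ^ α * ((k : ℝ) + 1) ^ (-(α / β))) * m := by ring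
    _ ≤ C₁ * (sq k) ^ α * m := by
        apply mul_le_mul_of_nonneg_right _ hmpos.le
        exact mul_le_mul_of_nonneg_left hstep1 hC₁.le
    _ ≤ p (sq k) * |S (t₀ + (k : ℝ) * T)| := by
        apply mul_le_mul hp_sk hSlow hmpos.le hp_pos.le
    _ = |y (sq k)| := hyval.symm
  refine ⟨hkT, hak_mem, ?_, hord1, hord2, lt_trans hord1 hord2, hak_lo, hak_up, hchain.trans hsup⟩
  rw [hy (a k), hq_ak, hSkT k, mul_zero]
end
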